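/- arXiv:2408.06395 — 3 statements merged into one kernel-verified Lean document; each statement's English description precedes it below -/
import Mathlib

section
/- Let n ≥ d ≥ 1 and let A, A' ∈ ℝ^{n×d} have full column rank, with rows a_1ᵀ,…,a_nᵀ and a'_1ᵀ,…,a'_nᵀ respectively. Suppose A and A' differ only in the j-th row and ‖a_j − a'_j‖₂ ≤ ε₀. Let c ∈ (0,1] and let w ∈ ℝⁿ satisfy c ≤ w_i ≤ 1 for all i, with W = diag(w). Suppose ε₀ ≤ 0.1·√c·σmin(A), and set ε₁ := 8·c⁻²·κ(A)·σmin(A)⁻³·ε₀. Then ‖f(w,A) − f(w,A')‖₂² ≤ (n−1)·(ε₁·σmax(A)²)² + (ε₁·(σmax(A)+ε₀)² + ε₀·σmin(W^{1/2}A)⁻²·(2σmax(A)+ε₀))². -/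
open Matrix

noncomputable def l2norm {m : Type*} [Fintype m] (x : m → ℝ) : ℝ :=
  Real.sqrt (∑ i, x i ^ 2)

/-- Spectral (operator) norm with respect to Euclidean norms. -/
noncomputable def specNorm {m k : Type*} [Fintype m] [Fintype k] (A : Matrix m k ℝ) : ℝ :=
  sSup {r | ∃ x : k → ℝ, l2norm x = 1 ∧ r = l2norm (A.mulVec x)}

/-- Largest singular value. -/
noncomputable def sigmaMax {m k : Type*} [Fintype m] [Fintype k] (A : Matrix m k ℝ) : ℝ :=
  specNorm A

/-- Smallest singular value. -/
noncomputable def sigmaMin {m k : Type*} [Fintype m] [Fintype k] (A : Matrix m k ℝ) : ℝ :=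
  sInf {r | ∃ x : k → ℝ, l2norm x = 1 ∧ r = l2norm (A.mulVec x)}

/-- Condition number. -/
noncomputable def kappa {m k : Type*} [Fintype m] [Fintype k] (A : Matrix m k ℝ) : ℝ :=
  sigmaMax A / sigmaMin A

/-- The weighted leverage score vector `f(w, A)`, with
`f(w,A)_i = w_i · a_iᵀ (Aᵀ W A)⁻¹ a_i` where `W = diag(w)`. -/
noncomputable def lewisF {n d : ℕ} (w : Fin n → ℝ) (A : Matrix (Fin n) (Fin d) ℝ)
    (i : Fin n) : ℝ :=
  w i * (A i ⬝ᵥ ((Aᵀ * Matrix.diagonal w * A)⁻¹).mulVec (A i))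

namespace LewisAux

variable {m k : Type*} [Fintype m] [Fintype k]

/-- View a plain vector as a Euclidean space vector (definitionally the identity). -/
def toE {m : Type*} [Fintype m] (x : m → ℝ) : EuclideanSpace ℝ m := WithLp.toLp 2 x

lemma l2norm_eq (x : m → ℝ) : l2norm x = ‖toE x‖ := by
  rw [EuclideanSpace.norm_eq]
  simp [l2norm, toE, Real.norm_eq_abs, sq_abs]

lemma l2norm_nonneg (x : m → ℝ) : 0 ≤ l2norm x := Real.sqrt_nonneg _

lemma l2norm_zero : l2norm (0 : m → ℝ) = 0 := by simp [l2norm]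

lemma l2norm_pos {x : m → ℝ} (hx : x ≠ 0) : 0 < l2norm x := by
  rw [l2norm_eq]; exact norm_pos_iff.mpr (by simpa [toE] using hx)

lemma l2norm_sq (x : m → ℝ) : l2norm x ^ 2 = ∑ i, x i ^ 2 := by
  rw [l2norm, Real.sq_sqrt]; positivity

lemma l2norm_smul (r : ℝ) (x : m → ℝ) : l2norm (r • x) = |r| * l2norm x := by
  have h : toE (r • x) = r • toE x := rfl
  simp only [l2norm_eq, h, norm_smul, Real.norm_eq_abs]

lemma l2norm_neg (x : m → ℝ) : l2norm (-x) = l2norm x := by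
  have h : toE (-x) = -toE x := rfl
  simp only [l2norm_eq, h, norm_neg]

lemma l2norm_add_le (x y : m → ℝ) : l2norm (x + y) ≤ l2norm x + l2norm y := by
  have h : toE (x + y) = toE x + toE y := rfl
  simp only [l2norm_eq, h]; exact norm_add_le _ _

lemma abs_coord_le (x : m → ℝ) (i : m) : |x i| ≤ l2norm x := by
  rw [← Real.sqrt_sq_eq_abs, l2norm]
  exact Real.sqrt_le_sqrt
    (Finset.single_le_sum (f := fun i => x i ^ 2) (fun i _ => sq_nonneg _) (Finset.mem_univ i))

lemma abs_dot_le (x y : k → ℝ) : |x ⬝ᵥ y| ≤ l2norm x * l2norm y := by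
  have h : x ⬝ᵥ y = inner ℝ (toE x) (toE y) := by
    simp [dotProduct, PiLp.inner_apply, RCLike.inner_apply, toE, mul_comm]
  rw [h, l2norm_eq, l2norm_eq]
  exact abs_real_inner_le_norm _ _

lemma exists_unit [Nonempty k] : ∃ x : k → ℝ, l2norm x = 1 := by
  classical
  obtain ⟨i0⟩ := ‹Nonempty k›
  refine ⟨Pi.single i0 1, ?_⟩
  rw [l2norm]
  have h : ∀ i, (Pi.single i0 1 : k → ℝ) i ^ 2 = if i = i0 then 1 else 0 := by
    intro i
    by_cases h : i = i0 <;> simp [Pi.single_apply, h]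
  rw [Finset.sum_congr rfl (fun i _ => h i)]
  simp

lemma specSet_nonempty [Nonempty k] (A : Matrix m k ℝ) :
    {r | ∃ x : k → ℝ, l2norm x = 1 ∧ r = l2norm (A.mulVec x)}.Nonempty := by
  obtain ⟨x, hx⟩ := exists_unit (k := k)
  exact ⟨l2norm (A.mulVec x), x, hx, rfl⟩

lemma mulVec_frob_bound (A : Matrix m k ℝ) (x : k → ℝ) :
    l2norm (A.mulVec x) ≤ Real.sqrt (∑ i, l2norm (A i) ^ 2) * l2norm x := by
  have h1 : ∀ i, (A.mulVec x) i ^ 2 ≤ l2norm (A i) ^ 2 * l2norm x ^ 2 := by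
    intro i
    have h2 : |(A.mulVec x) i| ≤ l2norm (A i) * l2norm x := abs_dot_le (A i) x
    calc (A.mulVec x) i ^ 2 = |(A.mulVec x) i| ^ 2 := (sq_abs _).symm
      _ ≤ (l2norm (A i) * l2norm x) ^ 2 := by
          apply pow_le_pow_left₀ (abs_nonneg _) h2
      _ = l2norm (A i) ^ 2 * l2norm x ^ 2 := by ring
  have h3 : ∑ i, (A.mulVec x) i ^ 2 ≤ (∑ i, l2norm (A i) ^ 2) * l2norm x ^ 2 := by
    rw [Finset.sum_mul]
    exact Finset.sum_le_sum fun i _ => h1 i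
  rw [l2norm]
  calc Real.sqrt (∑ i, (A.mulVec x) i ^ 2)
      ≤ Real.sqrt ((∑ i, l2norm (A i) ^ 2) * l2norm x ^ 2) := Real.sqrt_le_sqrt h3
    _ = Real.sqrt (∑ i, l2norm (A i) ^ 2) * l2norm x := by
        rw [Real.sqrt_mul (by positivity), Real.sqrt_sq (l2norm_nonneg x)]

lemma specSet_bddAbove (A : Matrix m k ℝ) :
    BddAbove {r | ∃ x : k → ℝ, l2norm x = 1 ∧ r = l2norm (A.mulVec x)} := by
  refine ⟨Real.sqrt (∑ i, l2norm (A i) ^ 2), ?_⟩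
  rintro r ⟨x, hx, rfl⟩
  have h := mulVec_frob_bound A x
  rwa [hx, mul_one] at h

lemma specSet_bddBelow (A : Matrix m k ℝ) :
    BddBelow {r | ∃ x : k → ℝ, l2norm x = 1 ∧ r = l2norm (A.mulVec x)} := by
  refine ⟨0, ?_⟩
  rintro r ⟨x, hx, rfl⟩
  exact l2norm_nonneg _

lemma mulVec_le_specNorm (A : Matrix m k ℝ) (x : k → ℝ) :
    l2norm (A.mulVec x) ≤ specNorm A * l2norm x := by
  by_cases hx : x = 0
  · subst hx; simp [Matrix.mulVec_zero, l2norm]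
  · have hpos : 0 < l2norm x := l2norm_pos hx
    set u := (l2norm x)⁻¹ • x with hu
    have hul : l2norm u = 1 := by
      rw [hu, l2norm_smul, abs_of_pos (inv_pos.mpr hpos), inv_mul_cancel₀ hpos.ne']
    have hmem : l2norm (A.mulVec u) ∈
        {r | ∃ y : k → ℝ, l2norm y = 1 ∧ r = l2norm (A.mulVec y)} := ⟨u, hul, rfl⟩
    have hle := le_csSup (specSet_bddAbove A) hmem
    have hAu : A.mulVec u = (l2norm x)⁻¹ • A.mulVec x := by
      rw [hu, Matrix.mulVec_smul]
    rw [hAu, l2norm_smul, abs_of_pos (inv_pos.mpr hpos)] at hle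
    calc l2norm (A.mulVec x) = l2norm x * ((l2norm x)⁻¹ * l2norm (A.mulVec x)) := by
          field_simp
      _ ≤ l2norm x * specNorm A := mul_le_mul_of_nonneg_left hle (le_of_lt hpos)
      _ = specNorm A * l2norm x := mul_comm _ _

lemma sigmaMin_mul_le (A : Matrix m k ℝ) (x : k → ℝ) :
    sigmaMin A * l2norm x ≤ l2norm (A.mulVec x) := by
  by_cases hx : x = 0
  · subst hx; simp [Matrix.mulVec_zero, l2norm]
  · have hpos : 0 < l2norm x := l2norm_pos hx
    set u := (l2norm x)⁻¹ • x with hu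
    have hul : l2norm u = 1 := by
      rw [hu, l2norm_smul, abs_of_pos (inv_pos.mpr hpos), inv_mul_cancel₀ hpos.ne']
    have hmem : l2norm (A.mulVec u) ∈
        {r | ∃ y : k → ℝ, l2norm y = 1 ∧ r = l2norm (A.mulVec y)} := ⟨u, hul, rfl⟩
    have hle := csInf_le (specSet_bddBelow A) hmem
    have hAu : A.mulVec u = (l2norm x)⁻¹ • A.mulVec x := by
      rw [hu, Matrix.mulVec_smul]
    rw [hAu, l2norm_smul, abs_of_pos (inv_pos.mpr hpos)] at hle
    calc sigmaMin A * l2norm x ≤ ((l2norm x)⁻¹ * l2norm (A.mulVec x)) * l2norm x :=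
          mul_le_mul_of_nonneg_right hle (le_of_lt hpos)
      _ = l2norm (A.mulVec x) := by field_simp

lemma le_sigmaMin [Nonempty k] (A : Matrix m k ℝ) {b : ℝ}
    (hb : ∀ x : k → ℝ, l2norm x = 1 → b ≤ l2norm (A.mulVec x)) : b ≤ sigmaMin A := by
  apply le_csInf (specSet_nonempty A)
  rintro r ⟨x, hx, rfl⟩
  exact hb x hx

lemma sigmaMin_nonneg' [Nonempty k] (A : Matrix m k ℝ) : 0 ≤ sigmaMin A :=
  le_sigmaMin A fun _ _ => l2norm_nonneg _

lemma specNorm_nonneg [Nonempty k] (A : Matrix m k ℝ) : 0 ≤ specNorm A := by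
  obtain ⟨x, hx⟩ := exists_unit (k := k)
  exact le_trans (l2norm_nonneg (A.mulVec x)) (le_csSup (specSet_bddAbove A) ⟨x, hx, rfl⟩)

lemma sigmaMin_le_specNorm [Nonempty k] (A : Matrix m k ℝ) : sigmaMin A ≤ specNorm A := by
  obtain ⟨x, hx⟩ := exists_unit (k := k)
  have h1 : sigmaMin A ≤ l2norm (A.mulVec x) := csInf_le (specSet_bddBelow A) ⟨x, hx, rfl⟩
  have h2 := mulVec_le_specNorm A x
  rw [hx, mul_one] at h2
  linarith

lemma row_le_specNorm [Nonempty k] (A : Matrix m k ℝ) (i : m) :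
    l2norm (A i) ≤ specNorm A := by
  by_cases h : A i = 0
  · rw [h, l2norm_zero]; exact specNorm_nonneg A
  · have hpos : 0 < l2norm (A i) := l2norm_pos h
    have h1 : l2norm (A i) ^ 2 = (A *ᵥ (A i)) i := by
      rw [show (A *ᵥ (A i)) i = A i ⬝ᵥ A i from rfl, l2norm, Real.sq_sqrt (by positivity)]
      simp [dotProduct, sq]
    have h2 : (A *ᵥ (A i)) i ≤ l2norm (A *ᵥ (A i)) :=
      le_trans (le_abs_self _) (abs_coord_le _ _)
    have h3 := mulVec_le_specNorm A (A i)
    nlinarith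

lemma sigmaMin_pos [Nonempty k] {A : Matrix m k ℝ} (hinj : Function.Injective A.mulVec) :
    0 < sigmaMin A := by
  classical
  set g : EuclideanSpace ℝ k → ℝ := fun y => ‖toE (A.mulVec ((WithLp.equiv 2 _) y))‖ with hg
  have hcont : Continuous g := by
    apply Continuous.norm
    have h1 : Continuous fun y : EuclideanSpace ℝ k => (WithLp.equiv 2 (k → ℝ)) y :=
      PiLp.continuous_ofLp 2 (fun _ : k => ℝ)
    have h2 : Continuous fun v : k → ℝ => A.mulVec v := by
      exact continuous_const.matrix_mulVec continuous_id
    exact (PiLp.continuous_toLp 2 (fun _ : m => ℝ)).comp (h2.comp h1)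
  have hsph : IsCompact (Metric.sphere (0 : EuclideanSpace ℝ k) 1) := isCompact_sphere _ _
  have hne : (Metric.sphere (0 : EuclideanSpace ℝ k) 1).Nonempty :=
    NormedSpace.sphere_nonempty.mpr (by norm_num)
  obtain ⟨y0, hy0mem, hy0min⟩ := hsph.exists_isMinOn hne hcont.continuousOn
  have hy0norm : ‖y0‖ = 1 := by simpa using mem_sphere_zero_iff_norm.mp hy0mem
  have hset : {r | ∃ x : k → ℝ, l2norm x = 1 ∧ r = l2norm (A.mulVec x)} =
      g '' (Metric.sphere (0 : EuclideanSpace ℝ k) 1) := by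
    ext r
    constructor
    · rintro ⟨x, hx, rfl⟩
      refine ⟨toE x, ?_, ?_⟩
      · rw [mem_sphere_zero_iff_norm, ← l2norm_eq, hx]
      · rw [hg]; simp only [l2norm_eq]; rfl
    · rintro ⟨y, hy, rfl⟩
      refine ⟨(WithLp.equiv 2 _) y, ?_, ?_⟩
      · rw [l2norm_eq]
        have h4 : toE ((WithLp.equiv 2 (k → ℝ)) y) = y := rfl
        rw [h4]
        simpa using mem_sphere_zero_iff_norm.mp hy
      · rw [hg]; simp only [l2norm_eq]
  rw [sigmaMin, hset]
  have hval : sInf (g '' Metric.sphere (0 : EuclideanSpace ℝ k) 1) = g y0 := by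
    apply le_antisymm
    · exact csInf_le ⟨0, by rintro r ⟨y, _, rfl⟩; exact norm_nonneg _⟩ ⟨y0, hy0mem, rfl⟩
    · apply le_csInf (hne.image g)
      rintro r ⟨y, hy, rfl⟩
      exact hy0min hy
  rw [hval, hg]
  simp only
  apply norm_pos_iff.mpr
  intro hzero
  have hx0 : (WithLp.equiv 2 (k → ℝ)) y0 = 0 := by
    apply hinj
    rw [Matrix.mulVec_zero]
    exact congrArg WithLp.ofLp hzero
  have h5 : y0 = 0 := congrArg (WithLp.toLp 2) hx0
  rw [h5] at hy0norm
  simp at hy0norm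

lemma smul_add_smul_norm_le (a b : ℝ) (x y : k → ℝ) :
    l2norm (a • x + b • y) ≤ |a| * l2norm x + |b| * l2norm y := by
  calc l2norm (a • x + b • y) ≤ l2norm (a • x) + l2norm (b • y) := l2norm_add_le _ _
    _ = |a| * l2norm x + |b| * l2norm y := by rw [l2norm_smul, l2norm_smul]

section FinStuff
variable {n d : ℕ}

lemma rank_inj {A : Matrix (Fin n) (Fin d) ℝ} (h : A.rank = d) :
    Function.Injective A.mulVec := by
  have hker : LinearMap.ker A.mulVecLin = ⊥ := by
    have hrn := LinearMap.finrank_range_add_finrank_ker A.mulVecLin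
    rw [Matrix.rank] at h
    rw [h] at hrn
    have hdom : Module.finrank ℝ (Fin d → ℝ) = d := by simp
    rw [hdom] at hrn
    have hker0 : Module.finrank ℝ (LinearMap.ker A.mulVecLin) = 0 := by omega
    exact Submodule.finrank_eq_zero.mp hker0
  have hinj : Function.Injective A.mulVecLin := LinearMap.ker_eq_bot.mp hker
  intro x y hxy
  exact hinj hxy

lemma quad_eq (A : Matrix (Fin n) (Fin d) ℝ) (w : Fin n → ℝ) (x : Fin d → ℝ) :
    x ⬝ᵥ ((Aᵀ * Matrix.diagonal w * A) *ᵥ x) = ∑ i, w i * (A *ᵥ x) i ^ 2 := by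
  rw [← Matrix.mulVec_mulVec, ← Matrix.mulVec_mulVec, Matrix.dotProduct_mulVec,
    Matrix.vecMul_transpose]
  simp only [dotProduct, Matrix.mulVec_diagonal]
  exact Finset.sum_congr rfl fun i _ => by ring

lemma sqrtw_mulVec (A : Matrix (Fin n) (Fin d) ℝ) (w : Fin n → ℝ) (x : Fin d → ℝ) (i : Fin n) :
    ((Matrix.diagonal (fun i => Real.sqrt (w i)) * A) *ᵥ x) i = Real.sqrt (w i) * (A *ᵥ x) i := by
  rw [← Matrix.mulVec_mulVec, Matrix.mulVec_diagonal]

lemma mulVec_lower_of_quad {M : Matrix (Fin d) (Fin d) ℝ} {α : ℝ}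
    (h : ∀ x : Fin d → ℝ, α * l2norm x ^ 2 ≤ x ⬝ᵥ (M *ᵥ x)) (x : Fin d → ℝ) :
    α * l2norm x ≤ l2norm (M *ᵥ x) := by
  by_cases hx : x = 0
  · subst hx; simp [Matrix.mulVec_zero, l2norm]
  · have hpos := l2norm_pos hx
    have h1 := h x
    have h2 : x ⬝ᵥ (M *ᵥ x) ≤ l2norm x * l2norm (M *ᵥ x) :=
      le_trans (le_abs_self _) (abs_dot_le _ _)
    nlinarith [l2norm_nonneg (M *ᵥ x)]

lemma inj_of_lower {M : Matrix (Fin d) (Fin d) ℝ} {α : ℝ} (hα : 0 < α)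
    (h : ∀ x : Fin d → ℝ, α * l2norm x ≤ l2norm (M *ᵥ x)) :
    IsUnit M.det := by
  rw [← Matrix.isUnit_iff_isUnit_det, ← Matrix.mulVec_injective_iff_isUnit]
  intro x y hxy
  by_contra hne
  have hsub : M *ᵥ (x - y) = 0 := by rw [Matrix.mulVec_sub, hxy, sub_self]
  have h1 := h (x - y)
  rw [hsub, l2norm_zero] at h1
  have h3 : 0 < l2norm (x - y) := l2norm_pos (sub_ne_zero_of_ne hne)
  nlinarith

lemma inv_mulVec_le {M : Matrix (Fin d) (Fin d) ℝ} {α : ℝ} (hα : 0 < α)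
    (h : ∀ x : Fin d → ℝ, α * l2norm x ≤ l2norm (M *ᵥ x)) (y : Fin d → ℝ) :
    l2norm (M⁻¹ *ᵥ y) ≤ α⁻¹ * l2norm y := by
  have hdet := inj_of_lower hα h
  have hid : M *ᵥ (M⁻¹ *ᵥ y) = y := by
    rw [Matrix.mulVec_mulVec, Matrix.mul_nonsing_inv _ hdet, Matrix.one_mulVec]
  have h1 := h (M⁻¹ *ᵥ y)
  rw [hid] at h1
  rw [inv_mul_eq_div, le_div_iff₀ hα]
  linarith

lemma diff_mulVec (A A' : Matrix (Fin n) (Fin d) ℝ) (w : Fin n → ℝ) (j : Fin n)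
    (hrow : ∀ i : Fin n, i ≠ j → A i = A' i) (v : Fin d → ℝ) :
    ((Aᵀ * Matrix.diagonal w * A) - (A'ᵀ * Matrix.diagonal w * A')) *ᵥ v =
      w j • (((A j - A' j) ⬝ᵥ v) • A j + (A' j ⬝ᵥ v) • (A j - A' j)) := by
  funext p
  have hM : ∀ (B : Matrix (Fin n) (Fin d) ℝ),
      ((Bᵀ * Matrix.diagonal w * B) *ᵥ v) p = ∑ i, w i * (B i ⬝ᵥ v) * B i p := by
    intro B
    rw [← Matrix.mulVec_mulVec, ← Matrix.mulVec_mulVec]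
    have hT : ∀ u : Fin n → ℝ, (Bᵀ *ᵥ u) p = ∑ i, u i * B i p := by
      intro u
      simp [Matrix.mulVec, dotProduct, Matrix.transpose_apply, mul_comm]
    rw [hT]
    apply Finset.sum_congr rfl
    intro i _
    rw [Matrix.mulVec_diagonal]
    have h : (B *ᵥ v) i = B i ⬝ᵥ v := rfl
    rw [h]
  rw [Matrix.sub_mulVec]
  show ((Aᵀ * Matrix.diagonal w * A) *ᵥ v) p - ((A'ᵀ * Matrix.diagonal w * A') *ᵥ v) p = _
  rw [hM A, hM A', ← Finset.sum_sub_distrib]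
  rw [Finset.sum_eq_single j]
  · simp only [Pi.smul_apply, Pi.add_apply, Pi.sub_apply, smul_eq_mul]
    have h : (A j - A' j) ⬝ᵥ v = A j ⬝ᵥ v - A' j ⬝ᵥ v := sub_dotProduct _ _ _
    rw [h]
    ring
  · intro i _ hNe
    rw [hrow i hNe]
    ring
  · intro h; exact absurd (Finset.mem_univ j) h

lemma l2norm_single (j : Fin n) (r : ℝ) : l2norm (Pi.single j r : Fin n → ℝ) = |r| := by
  classical
  rw [l2norm]
  have h : ∀ i, (Pi.single j r : Fin n → ℝ) i ^ 2 = if i = j then r ^ 2 else 0 := by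
    intro i
    by_cases hij : i = j <;> simp [Pi.single_apply, hij]
  rw [Finset.sum_congr rfl fun i _ => h i, Finset.sum_ite_eq' Finset.univ j fun _ => r ^ 2]
  simp [Real.sqrt_sq_eq_abs]

end FinStuff
end LewisAux

open LewisAux in
set_option maxHeartbeats 2000000 in
theorem lipschitz_bound_lewis_weights
    (n d : ℕ) (hd : 1 ≤ d) (hdn : d ≤ n)
    (A A' : Matrix (Fin n) (Fin d) ℝ)
    (hrankA : A.rank = d) (hrankA' : A'.rank = d)
    (j : Fin n) (ε₀ : ℝ)
    (hrow : ∀ i : Fin n, i ≠ j → A i = A' i)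
    (hj : l2norm (A j - A' j) ≤ ε₀)
    (c : ℝ) (hc0 : 0 < c) (hc1 : c ≤ 1)
    (w : Fin n → ℝ) (hw : ∀ i, c ≤ w i ∧ w i ≤ 1)
    (hε₀ : ε₀ ≤ 0.1 * Real.sqrt c * sigmaMin A)
    (ε₁ : ℝ) (hε₁ : ε₁ = 8 * c⁻¹ ^ 2 * kappa A * (sigmaMin A ^ 3)⁻¹ * ε₀) :
    l2norm (fun i => lewisF w A i - lewisF w A' i) ^ 2 ≤
      ((n : ℝ) - 1) * (ε₁ * sigmaMax A ^ 2) ^ 2 +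
        (ε₁ * (sigmaMax A + ε₀) ^ 2 +
          ε₀ * (sigmaMin (Matrix.diagonal (fun i => Real.sqrt (w i)) * A) ^ 2)⁻¹ *
            (2 * sigmaMax A + ε₀)) ^ 2 := by
  classical
  haveI : Nonempty (Fin d) := ⟨⟨0, hd⟩⟩
  -- basic quantities
  set s := sigmaMin A with hs_def
  set σ := sigmaMax A with hσ_def
  set t := sigmaMin (Matrix.diagonal (fun i => Real.sqrt (w i)) * A) with ht_def
  set δ := A j - A' j with hδ_def
  set D := Matrix.diagonal w with hD_def
  set M := Aᵀ * D * A with hM_def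
  set M' := A'ᵀ * D * A' with hM'_def
  have hε₀0 : 0 ≤ ε₀ := le_trans (l2norm_nonneg _) hj
  have hs : 0 < s := sigmaMin_pos (rank_inj hrankA)
  have hσs : s ≤ σ := sigmaMin_le_specNorm A
  have hσ : 0 < σ := lt_of_lt_of_le hs hσs
  have hsqrtc_le : Real.sqrt c ≤ 1 := by
    rw [show (1 : ℝ) = Real.sqrt 1 by simp]
    exact Real.sqrt_le_sqrt hc1
  have hε₀s : ε₀ ≤ 0.1 * s := by
    calc ε₀ ≤ 0.1 * Real.sqrt c * s := hε₀
      _ ≤ 0.1 * 1 * s := by nlinarith [hs.le, Real.sqrt_nonneg c]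
      _ = 0.1 * s := by ring
  have hε₀σ : ε₀ ≤ 0.1 * σ := le_trans hε₀s (by nlinarith)
  -- rows
  have hrowA : ∀ i, l2norm (A i) ≤ σ := fun i => row_le_specNorm A i
  have hδn : l2norm δ ≤ ε₀ := hj
  have hrowA'j : l2norm (A' j) ≤ σ + ε₀ := by
    have h1 : A' j = A j + (-δ) := by rw [hδ_def]; ring
    rw [h1]
    calc l2norm (A j + (-δ)) ≤ l2norm (A j) + l2norm (-δ) := l2norm_add_le _ _
      _ = l2norm (A j) + l2norm δ := by rw [l2norm_neg]
      _ ≤ σ + ε₀ := add_le_add (hrowA j) hδn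
  -- lower bound for A'
  have hA'low : ∀ x : Fin d → ℝ, (s - ε₀) * l2norm x ≤ l2norm (A' *ᵥ x) := by
    intro x
    have hdiff : A *ᵥ x - A' *ᵥ x = Pi.single j (δ ⬝ᵥ x) := by
      funext i
      by_cases hij : i = j
      · subst hij
        simp only [Pi.sub_apply, Pi.single_eq_same]
        show A i ⬝ᵥ x - A' i ⬝ᵥ x = δ ⬝ᵥ x
        rw [hδ_def, sub_dotProduct]
      · simp only [Pi.sub_apply, Pi.single_eq_of_ne hij]
        show A i ⬝ᵥ x - A' i ⬝ᵥ x = 0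
        rw [hrow i hij, sub_self]
    have h2 : l2norm (A *ᵥ x) ≤ l2norm (A' *ᵥ x) + l2norm (Pi.single j (δ ⬝ᵥ x)) := by
      have h3 : A *ᵥ x = A' *ᵥ x + Pi.single j (δ ⬝ᵥ x) := by
        rw [← hdiff]; abel
      calc l2norm (A *ᵥ x) = l2norm (A' *ᵥ x + Pi.single j (δ ⬝ᵥ x)) := by rw [← h3]
        _ ≤ l2norm (A' *ᵥ x) + l2norm (Pi.single j (δ ⬝ᵥ x)) := by
            exact l2norm_add_le (A' *ᵥ x) (Pi.single j (δ ⬝ᵥ x))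
    have h4 : l2norm (Pi.single j (δ ⬝ᵥ x)) ≤ ε₀ * l2norm x := by
      rw [l2norm_single]
      calc |δ ⬝ᵥ x| ≤ l2norm δ * l2norm x := abs_dot_le _ _
        _ ≤ ε₀ * l2norm x := mul_le_mul_of_nonneg_right hδn (l2norm_nonneg x)
    have h5 : s * l2norm x ≤ l2norm (A *ᵥ x) := sigmaMin_mul_le A x
    linarith
  -- quadratic lower bounds
  have hwc : ∀ i, c ≤ w i := fun i => (hw i).1
  have hw1 : ∀ i, w i ≤ 1 := fun i => (hw i).2
  have hw0 : ∀ i, 0 ≤ w i := fun i => le_trans hc0.le (hwc i)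
  have htc : Real.sqrt c * s ≤ t := by
    apply le_sigmaMin
    intro x hx
    have h1 : l2norm ((Matrix.diagonal (fun i => Real.sqrt (w i)) * A) *ᵥ x) ^ 2 =
        ∑ i, w i * (A *ᵥ x) i ^ 2 := by
      rw [l2norm_sq]
      apply Finset.sum_congr rfl
      intro i _
      rw [sqrtw_mulVec]
      rw [mul_pow, Real.sq_sqrt (hw0 i)]
    have h2 : c * (s * 1) ^ 2 ≤ ∑ i, w i * (A *ᵥ x) i ^ 2 := by
      have h3 : ∑ i, c * (A *ᵥ x) i ^ 2 ≤ ∑ i, w i * (A *ᵥ x) i ^ 2 :=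
        Finset.sum_le_sum fun i _ => mul_le_mul_of_nonneg_right (hwc i) (sq_nonneg _)
      have h4 : s * l2norm x ≤ l2norm (A *ᵥ x) := sigmaMin_mul_le A x
      rw [hx, mul_one] at h4
      have h5 : (s * 1) ^ 2 ≤ l2norm (A *ᵥ x) ^ 2 := by
        rw [mul_one]
        apply pow_le_pow_left₀ hs.le h4
      have h6 : l2norm (A *ᵥ x) ^ 2 = ∑ i, (A *ᵥ x) i ^ 2 := l2norm_sq _
      calc c * (s * 1) ^ 2 ≤ c * l2norm (A *ᵥ x) ^ 2 := by nlinarith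
        _ = ∑ i, c * (A *ᵥ x) i ^ 2 := by rw [h6, Finset.mul_sum]
        _ ≤ _ := h3
    have h7 : (Real.sqrt c * s) ^ 2 ≤
        l2norm ((Matrix.diagonal (fun i => Real.sqrt (w i)) * A) *ᵥ x) ^ 2 := by
      rw [h1, mul_pow, Real.sq_sqrt hc0.le]
      calc c * s ^ 2 = c * (s * 1) ^ 2 := by ring
        _ ≤ _ := h2
    have h8 := Real.sqrt_le_sqrt h7
    rwa [Real.sqrt_sq (by positivity), Real.sqrt_sq (l2norm_nonneg _)] at h8
  have ht0 : 0 < t := lt_of_lt_of_le (by positivity) htc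
  have ht2cs : c * s ^ 2 ≤ t ^ 2 := by
    have h1 : (Real.sqrt c * s) ^ 2 ≤ t ^ 2 := pow_le_pow_left₀ (by positivity) htc 2
    rwa [mul_pow, Real.sq_sqrt hc0.le] at h1
  -- quadratic bound for M
  have hquadM : ∀ x : Fin d → ℝ, t ^ 2 * l2norm x ^ 2 ≤ x ⬝ᵥ (M *ᵥ x) := by
    intro x
    rw [hM_def, hD_def, quad_eq]
    have h1 : l2norm ((Matrix.diagonal (fun i => Real.sqrt (w i)) * A) *ᵥ x) ^ 2 =
        ∑ i, w i * (A *ᵥ x) i ^ 2 := by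
      rw [l2norm_sq]
      exact Finset.sum_congr rfl fun i _ => by
        rw [sqrtw_mulVec, mul_pow, Real.sq_sqrt (hw0 i)]
    rw [← h1]
    have h2 : t * l2norm x ≤ l2norm ((Matrix.diagonal (fun i => Real.sqrt (w i)) * A) *ᵥ x) :=
      sigmaMin_mul_le _ x
    have h2' : (t * l2norm x) ^ 2 ≤
        l2norm ((Matrix.diagonal (fun i => Real.sqrt (w i)) * A) *ᵥ x) ^ 2 :=
      pow_le_pow_left₀ (mul_nonneg ht0.le (l2norm_nonneg x)) h2 2
    calc t ^ 2 * l2norm x ^ 2 = (t * l2norm x) ^ 2 := by ring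
      _ ≤ l2norm ((Matrix.diagonal (fun i => Real.sqrt (w i)) * A) *ᵥ x) ^ 2 := h2'
  -- quadratic bound for M'
  set α' : ℝ := c * (0.9 * s) ^ 2 with hα'_def
  have hα'pos : 0 < α' := by positivity
  have hquadM' : ∀ x : Fin d → ℝ, α' * l2norm x ^ 2 ≤ x ⬝ᵥ (M' *ᵥ x) := by
    intro x
    rw [hM'_def, hD_def, quad_eq]
    have h3 : ∑ i, c * (A' *ᵥ x) i ^ 2 ≤ ∑ i, w i * (A' *ᵥ x) i ^ 2 :=
      Finset.sum_le_sum fun i _ => mul_le_mul_of_nonneg_right (hwc i) (sq_nonneg _)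
    have h4 := hA'low x
    have h5 : 0.9 * s * l2norm x ≤ l2norm (A' *ᵥ x) := by
      have h5a : 0.9 * s ≤ s - ε₀ := by linarith
      have h5b := mul_le_mul_of_nonneg_right h5a (l2norm_nonneg x)
      linarith
    have h6 : (0.9 * s) ^ 2 * l2norm x ^ 2 ≤ l2norm (A' *ᵥ x) ^ 2 := by
      have h6a : (0.9 * s * l2norm x) ^ 2 ≤ l2norm (A' *ᵥ x) ^ 2 :=
        pow_le_pow_left₀ (mul_nonneg (by linarith [hs.le]) (l2norm_nonneg x)) h5 2
      calc (0.9 * s) ^ 2 * l2norm x ^ 2 = (0.9 * s * l2norm x) ^ 2 := by ring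
        _ ≤ l2norm (A' *ᵥ x) ^ 2 := h6a
    have h7 : l2norm (A' *ᵥ x) ^ 2 = ∑ i, (A' *ᵥ x) i ^ 2 := l2norm_sq _
    calc α' * l2norm x ^ 2 = c * ((0.9 * s) ^ 2 * l2norm x ^ 2) := by rw [hα'_def]; ring
      _ ≤ c * l2norm (A' *ᵥ x) ^ 2 := by nlinarith
      _ = ∑ i, c * (A' *ᵥ x) i ^ 2 := by rw [h7, Finset.mul_sum]
      _ ≤ _ := h3
  -- mulVec lower bounds and inverse bounds
  have hMlow : ∀ x, t ^ 2 * l2norm x ≤ l2norm (M *ᵥ x) := mulVec_lower_of_quad hquadM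
  have hM'low : ∀ x, α' * l2norm x ≤ l2norm (M' *ᵥ x) := mulVec_lower_of_quad hquadM'
  have ht2pos : (0 : ℝ) < t ^ 2 := by positivity
  have hdetM : IsUnit M.det := inj_of_lower ht2pos hMlow
  have hdetM' : IsUnit M'.det := inj_of_lower hα'pos hM'low
  have hinvM : ∀ y, l2norm (M⁻¹ *ᵥ y) ≤ (t ^ 2)⁻¹ * l2norm y := inv_mulVec_le ht2pos hMlow
  have hinvM' : ∀ y, l2norm (M'⁻¹ *ᵥ y) ≤ α'⁻¹ * l2norm y := inv_mulVec_le hα'pos hM'low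
  -- inverse difference identity
  have hinvid : M⁻¹ - M'⁻¹ = M⁻¹ * (M' - M) * M'⁻¹ := by
    rw [Matrix.mul_sub, Matrix.sub_mul, Matrix.mul_assoc,
      Matrix.mul_nonsing_inv _ hdetM', Matrix.mul_one]
    rw [Matrix.nonsing_inv_mul _ hdetM, Matrix.one_mul]
  -- bound on (M' - M) *ᵥ u
  set K : ℝ := ε₀ * (2 * σ + ε₀) with hK_def
  have hK0 : 0 ≤ K := by
    rw [hK_def]; exact mul_nonneg hε₀0 (by linarith)
  have hdiffbound : ∀ u : Fin d → ℝ, l2norm ((M' - M) *ᵥ u) ≤ K * l2norm u := by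
    intro u
    have h1 : (M - M') *ᵥ u = w j • ((δ ⬝ᵥ u) • A j + (A' j ⬝ᵥ u) • δ) := by
      rw [hM_def, hM'_def, hD_def, hδ_def]
      exact diff_mulVec A A' w j hrow u
    have h2 : l2norm ((M' - M) *ᵥ u) = l2norm ((M - M') *ᵥ u) := by
      have h3 : (M' - M) *ᵥ u = -((M - M') *ᵥ u) := by
        rw [← Matrix.neg_mulVec, neg_sub]
      rw [h3, l2norm_neg]
    rw [h2, h1, l2norm_smul]
    have h4 : l2norm ((δ ⬝ᵥ u) • A j + (A' j ⬝ᵥ u) • δ) ≤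
        |δ ⬝ᵥ u| * l2norm (A j) + |A' j ⬝ᵥ u| * l2norm δ := smul_add_smul_norm_le _ _ _ _
    have h5 : |δ ⬝ᵥ u| ≤ ε₀ * l2norm u := by
      calc |δ ⬝ᵥ u| ≤ l2norm δ * l2norm u := abs_dot_le _ _
        _ ≤ ε₀ * l2norm u := mul_le_mul_of_nonneg_right hδn (l2norm_nonneg u)
    have h6 : |A' j ⬝ᵥ u| ≤ (σ + ε₀) * l2norm u := by
      calc |A' j ⬝ᵥ u| ≤ l2norm (A' j) * l2norm u := abs_dot_le _ _
        _ ≤ (σ + ε₀) * l2norm u := mul_le_mul_of_nonneg_right hrowA'j (l2norm_nonneg u)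
    have h7 : |w j| ≤ 1 := by
      rw [abs_of_nonneg (hw0 j)]; exact hw1 j
    have h8 : |δ ⬝ᵥ u| * l2norm (A j) + |A' j ⬝ᵥ u| * l2norm δ ≤ K * l2norm u := by
      have h9 : |δ ⬝ᵥ u| * l2norm (A j) ≤ ε₀ * l2norm u * σ :=
        mul_le_mul h5 (hrowA j) (l2norm_nonneg _) (mul_nonneg hε₀0 (l2norm_nonneg u))
      have h10 : |A' j ⬝ᵥ u| * l2norm δ ≤ (σ + ε₀) * l2norm u * ε₀ :=
        mul_le_mul h6 hδn (l2norm_nonneg _) (mul_nonneg (by linarith) (l2norm_nonneg u))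
      rw [hK_def]
      nlinarith [l2norm_nonneg u]
    calc |w j| * l2norm ((δ ⬝ᵥ u) • A j + (A' j ⬝ᵥ u) • δ)
        ≤ 1 * (K * l2norm u) := by
          apply mul_le_mul h7 (le_trans h4 h8) (l2norm_nonneg _) zero_le_one
      _ = K * l2norm u := one_mul _
  -- key: bound on quadratic differences through M⁻¹ - M'⁻¹
  have hdiffinv : ∀ u v : Fin d → ℝ,
      |u ⬝ᵥ ((M⁻¹ - M'⁻¹) *ᵥ v)| ≤ (t ^ 2)⁻¹ * α'⁻¹ * K * (l2norm u * l2norm v) := by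
    intro u v
    have h1 : (M⁻¹ - M'⁻¹) *ᵥ v = M⁻¹ *ᵥ ((M' - M) *ᵥ (M'⁻¹ *ᵥ v)) := by
      rw [hinvid, Matrix.mulVec_mulVec, Matrix.mulVec_mulVec]
    rw [h1]
    have h2 : l2norm (M⁻¹ *ᵥ ((M' - M) *ᵥ (M'⁻¹ *ᵥ v))) ≤
        (t ^ 2)⁻¹ * (K * (α'⁻¹ * l2norm v)) := by
      calc l2norm (M⁻¹ *ᵥ ((M' - M) *ᵥ (M'⁻¹ *ᵥ v)))
          ≤ (t ^ 2)⁻¹ * l2norm ((M' - M) *ᵥ (M'⁻¹ *ᵥ v)) := hinvM _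
        _ ≤ (t ^ 2)⁻¹ * (K * l2norm (M'⁻¹ *ᵥ v)) := by
            apply mul_le_mul_of_nonneg_left (hdiffbound _) (by positivity)
        _ ≤ (t ^ 2)⁻¹ * (K * (α'⁻¹ * l2norm v)) := by
            apply mul_le_mul_of_nonneg_left _ (by positivity)
            exact mul_le_mul_of_nonneg_left (hinvM' _) hK0
    calc |u ⬝ᵥ (M⁻¹ *ᵥ ((M' - M) *ᵥ (M'⁻¹ *ᵥ v)))|
        ≤ l2norm u * l2norm (M⁻¹ *ᵥ ((M' - M) *ᵥ (M'⁻¹ *ᵥ v))) := abs_dot_le _ _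
      _ ≤ l2norm u * ((t ^ 2)⁻¹ * (K * (α'⁻¹ * l2norm v))) :=
          mul_le_mul_of_nonneg_left h2 (l2norm_nonneg u)
      _ = (t ^ 2)⁻¹ * α'⁻¹ * K * (l2norm u * l2norm v) := by ring
  -- numeric comparison
  have hε₁0 : 0 ≤ ε₁ := by
    rw [hε₁, kappa, ← hs_def, ← hσ_def]
    have h0 : 0 ≤ σ / s := div_nonneg hσ.le hs.le
    have h1 : (0:ℝ) ≤ 8 * c⁻¹ ^ 2 := by positivity
    have h2 : (0:ℝ) ≤ (s ^ 3)⁻¹ := by positivity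
    calc (0:ℝ) ≤ (8 * c⁻¹ ^ 2 * (σ / s)) * ((s ^ 3)⁻¹ * ε₀) := by
          apply mul_nonneg (mul_nonneg h1 h0) (mul_nonneg h2 hε₀0)
      _ = 8 * c⁻¹ ^ 2 * (σ / s) * (s ^ 3)⁻¹ * ε₀ := by ring
  have hnumeric : (t ^ 2)⁻¹ * α'⁻¹ * K ≤ ε₁ := by
    have h1 : (t ^ 2)⁻¹ ≤ (c * s ^ 2)⁻¹ := by
      apply inv_anti₀ (by positivity) ht2cs
    have h2 : (t ^ 2)⁻¹ * α'⁻¹ * K ≤ (c * s ^ 2)⁻¹ * α'⁻¹ * K := by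
      apply mul_le_mul_of_nonneg_right _ hK0
      exact mul_le_mul_of_nonneg_right h1 (by positivity)
    refine le_trans h2 ?_
    rw [hε₁, kappa, ← hs_def, ← hσ_def, hα'_def, hK_def]
    rw [div_eq_mul_inv]
    have hs' : s ≠ 0 := hs.ne'
    have hc' : c ≠ 0 := hc0.ne'
    rw [← sub_nonneg]
    have hexp : 8 * c⁻¹ ^ 2 * (σ * s⁻¹) * (s ^ 3)⁻¹ * ε₀ -
        (c * s ^ 2)⁻¹ * (c * (0.9 * s) ^ 2)⁻¹ * (ε₀ * (2 * σ + ε₀)) =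
        (c⁻¹ ^ 2 * (s ^ 2)⁻¹ * (s ^ 2)⁻¹ * ε₀) * (8 * σ - (0.81)⁻¹ * (2 * σ + ε₀)) := by
      field_simp
      ring
    rw [hexp]
    apply mul_nonneg (by positivity)
    nlinarith
  -- per-coordinate bound, i ≠ j
  have hcoord : ∀ i : Fin n, i ≠ j →
      |lewisF w A i - lewisF w A' i| ≤ ε₁ * σ ^ 2 := by
    intro i hij
    have hAi : A' i = A i := (hrow i hij).symm
    have h1 : lewisF w A i - lewisF w A' i = w i * (A i ⬝ᵥ ((M⁻¹ - M'⁻¹) *ᵥ A i)) := by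
      simp only [lewisF]
      rw [hAi, ← hD_def, ← hM_def, ← hM'_def]
      rw [Matrix.sub_mulVec, dotProduct_sub]
      ring
    rw [h1, abs_mul, abs_of_nonneg (hw0 i)]
    have h2 := hdiffinv (A i) (A i)
    have h3 : l2norm (A i) * l2norm (A i) ≤ σ * σ :=
      mul_le_mul (hrowA i) (hrowA i) (l2norm_nonneg _) hσ.le
    calc w i * |A i ⬝ᵥ ((M⁻¹ - M'⁻¹) *ᵥ A i)|
        ≤ 1 * |A i ⬝ᵥ ((M⁻¹ - M'⁻¹) *ᵥ A i)| :=
          mul_le_mul_of_nonneg_right (hw1 i) (abs_nonneg _)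
      _ = |A i ⬝ᵥ ((M⁻¹ - M'⁻¹) *ᵥ A i)| := one_mul _
      _ ≤ (t ^ 2)⁻¹ * α'⁻¹ * K * (l2norm (A i) * l2norm (A i)) := h2
      _ ≤ ε₁ * (σ * σ) := by
          apply mul_le_mul hnumeric h3 (mul_nonneg (l2norm_nonneg _) (l2norm_nonneg _)) hε₁0
      _ = ε₁ * σ ^ 2 := by ring
  -- the j-th coordinate
  set B2 : ℝ := ε₁ * (σ + ε₀) ^ 2 + ε₀ * (t ^ 2)⁻¹ * (2 * σ + ε₀) with hB2_def
  have hB20 : 0 ≤ B2 := by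
    rw [hB2_def]
    have hb1 : (0:ℝ) ≤ (t ^ 2)⁻¹ := by positivity
    have hb2 : (0:ℝ) ≤ (σ + ε₀) ^ 2 := sq_nonneg _
    nlinarith [mul_nonneg hε₁0 hb2, mul_nonneg (mul_nonneg hε₀0 hb1) (by linarith : (0:ℝ) ≤ 2 * σ + ε₀)]
  have hcoordj : |lewisF w A j - lewisF w A' j| ≤ B2 := by
    have h1 : lewisF w A j - lewisF w A' j =
        w j * (δ ⬝ᵥ (M⁻¹ *ᵥ A j) + A' j ⬝ᵥ (M⁻¹ *ᵥ δ)) +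
        w j * (A' j ⬝ᵥ ((M⁻¹ - M'⁻¹) *ᵥ A' j)) := by
      simp only [lewisF]
      rw [← hD_def, ← hM_def, ← hM'_def]
      rw [Matrix.sub_mulVec, dotProduct_sub]
      have hδs : δ = A j - A' j := hδ_def
      have hAj : A j = A' j + δ := by rw [hδs]; ring
      have e1 : A j ⬝ᵥ (M⁻¹ *ᵥ A j) =
          A' j ⬝ᵥ (M⁻¹ *ᵥ A' j) + (δ ⬝ᵥ (M⁻¹ *ᵥ A j) + A' j ⬝ᵥ (M⁻¹ *ᵥ δ)) := by
        calc A j ⬝ᵥ (M⁻¹ *ᵥ A j) = (A' j + δ) ⬝ᵥ (M⁻¹ *ᵥ (A' j + δ)) := by rw [← hAj]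
          _ = A' j ⬝ᵥ (M⁻¹ *ᵥ A' j) + (δ ⬝ᵥ (M⁻¹ *ᵥ (A' j + δ)) + A' j ⬝ᵥ (M⁻¹ *ᵥ δ)) := by
              rw [Matrix.mulVec_add, add_dotProduct, dotProduct_add,
                dotProduct_add]
              ring
          _ = A' j ⬝ᵥ (M⁻¹ *ᵥ A' j) + (δ ⬝ᵥ (M⁻¹ *ᵥ A j) + A' j ⬝ᵥ (M⁻¹ *ᵥ δ)) := by
              rw [← hAj]
      rw [e1]
      ring
    rw [h1]
    have h2 : |w j * (δ ⬝ᵥ (M⁻¹ *ᵥ A j) + A' j ⬝ᵥ (M⁻¹ *ᵥ δ))| ≤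
        ε₀ * (t ^ 2)⁻¹ * (2 * σ + ε₀) := by
      rw [abs_mul, abs_of_nonneg (hw0 j)]
      have h3 : |δ ⬝ᵥ (M⁻¹ *ᵥ A j)| ≤ ε₀ * ((t ^ 2)⁻¹ * σ) := by
        calc |δ ⬝ᵥ (M⁻¹ *ᵥ A j)| ≤ l2norm δ * l2norm (M⁻¹ *ᵥ A j) := abs_dot_le _ _
          _ ≤ ε₀ * ((t ^ 2)⁻¹ * σ) := by
              apply mul_le_mul hδn _ (l2norm_nonneg _) hε₀0
              calc l2norm (M⁻¹ *ᵥ A j) ≤ (t ^ 2)⁻¹ * l2norm (A j) := hinvM _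
                _ ≤ (t ^ 2)⁻¹ * σ := mul_le_mul_of_nonneg_left (hrowA j) (by positivity)
      have h4 : |A' j ⬝ᵥ (M⁻¹ *ᵥ δ)| ≤ (σ + ε₀) * ((t ^ 2)⁻¹ * ε₀) := by
        calc |A' j ⬝ᵥ (M⁻¹ *ᵥ δ)| ≤ l2norm (A' j) * l2norm (M⁻¹ *ᵥ δ) := abs_dot_le _ _
          _ ≤ (σ + ε₀) * ((t ^ 2)⁻¹ * ε₀) := by
              apply mul_le_mul hrowA'j _ (l2norm_nonneg _) (by positivity)
              calc l2norm (M⁻¹ *ᵥ δ) ≤ (t ^ 2)⁻¹ * l2norm δ := hinvM _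
                _ ≤ (t ^ 2)⁻¹ * ε₀ := mul_le_mul_of_nonneg_left hδn (by positivity)
      have h5 : |δ ⬝ᵥ (M⁻¹ *ᵥ A j) + A' j ⬝ᵥ (M⁻¹ *ᵥ δ)| ≤
          ε₀ * ((t ^ 2)⁻¹ * σ) + (σ + ε₀) * ((t ^ 2)⁻¹ * ε₀) :=
        le_trans (abs_add_le _ _) (add_le_add h3 h4)
      have ht2inv : (0:ℝ) ≤ (t ^ 2)⁻¹ := by positivity
      calc w j * |δ ⬝ᵥ (M⁻¹ *ᵥ A j) + A' j ⬝ᵥ (M⁻¹ *ᵥ δ)|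
          ≤ 1 * (ε₀ * ((t ^ 2)⁻¹ * σ) + (σ + ε₀) * ((t ^ 2)⁻¹ * ε₀)) := by
            apply mul_le_mul (hw1 j) h5 (abs_nonneg _) zero_le_one
        _ = ε₀ * (t ^ 2)⁻¹ * (2 * σ + ε₀) := by ring
    have h6 : |w j * (A' j ⬝ᵥ ((M⁻¹ - M'⁻¹) *ᵥ A' j))| ≤ ε₁ * (σ + ε₀) ^ 2 := by
      rw [abs_mul, abs_of_nonneg (hw0 j)]
      have h7 := hdiffinv (A' j) (A' j)
      have h8 : l2norm (A' j) * l2norm (A' j) ≤ (σ + ε₀) * (σ + ε₀) :=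
        mul_le_mul hrowA'j hrowA'j (l2norm_nonneg _) (by linarith)
      calc w j * |A' j ⬝ᵥ ((M⁻¹ - M'⁻¹) *ᵥ A' j)|
          ≤ 1 * |A' j ⬝ᵥ ((M⁻¹ - M'⁻¹) *ᵥ A' j)| :=
            mul_le_mul_of_nonneg_right (hw1 j) (abs_nonneg _)
        _ = |A' j ⬝ᵥ ((M⁻¹ - M'⁻¹) *ᵥ A' j)| := one_mul _
        _ ≤ (t ^ 2)⁻¹ * α'⁻¹ * K * (l2norm (A' j) * l2norm (A' j)) := h7
        _ ≤ ε₁ * ((σ + ε₀) * (σ + ε₀)) :=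
            mul_le_mul hnumeric h8 (mul_nonneg (l2norm_nonneg _) (l2norm_nonneg _)) hε₁0
        _ = ε₁ * (σ + ε₀) ^ 2 := by ring
    calc |w j * (δ ⬝ᵥ (M⁻¹ *ᵥ A j) + A' j ⬝ᵥ (M⁻¹ *ᵥ δ)) +
          w j * (A' j ⬝ᵥ ((M⁻¹ - M'⁻¹) *ᵥ A' j))|
        ≤ |w j * (δ ⬝ᵥ (M⁻¹ *ᵥ A j) + A' j ⬝ᵥ (M⁻¹ *ᵥ δ))| +
          |w j * (A' j ⬝ᵥ ((M⁻¹ - M'⁻¹) *ᵥ A' j))| := abs_add_le _ _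
      _ ≤ ε₀ * (t ^ 2)⁻¹ * (2 * σ + ε₀) + ε₁ * (σ + ε₀) ^ 2 := add_le_add h2 h6
      _ = B2 := by rw [hB2_def]; ring
  -- assemble
  have hsum : l2norm (fun i => lewisF w A i - lewisF w A' i) ^ 2 =
      ∑ i, (lewisF w A i - lewisF w A' i) ^ 2 := l2norm_sq _
  rw [hsum]
  have hsplit : ∑ i, (lewisF w A i - lewisF w A' i) ^ 2 =
      (lewisF w A j - lewisF w A' j) ^ 2 +
      ∑ i ∈ Finset.univ.erase j, (lewisF w A i - lewisF w A' i) ^ 2 := by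
    rw [← Finset.add_sum_erase Finset.univ _ (Finset.mem_univ j)]
  rw [hsplit]
  have hB10 : 0 ≤ ε₁ * σ ^ 2 := by positivity
  have hterm1 : ∑ i ∈ Finset.univ.erase j, (lewisF w A i - lewisF w A' i) ^ 2 ≤
      ((n : ℝ) - 1) * (ε₁ * σ ^ 2) ^ 2 := by
    have h1 : ∀ i ∈ Finset.univ.erase j, (lewisF w A i - lewisF w A' i) ^ 2 ≤
        (ε₁ * σ ^ 2) ^ 2 := by
      intro i hi
      have hij : i ≠ j := Finset.ne_of_mem_erase hi
      have h2 := hcoord i hij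
      calc (lewisF w A i - lewisF w A' i) ^ 2 = |lewisF w A i - lewisF w A' i| ^ 2 :=
            (sq_abs _).symm
        _ ≤ (ε₁ * σ ^ 2) ^ 2 := pow_le_pow_left₀ (abs_nonneg _) h2 2
    calc ∑ i ∈ Finset.univ.erase j, (lewisF w A i - lewisF w A' i) ^ 2
        ≤ ∑ _i ∈ Finset.univ.erase j, (ε₁ * σ ^ 2) ^ 2 := Finset.sum_le_sum h1
      _ = ((Finset.univ.erase j).card : ℝ) * (ε₁ * σ ^ 2) ^ 2 := by
          rw [Finset.sum_const, nsmul_eq_mul]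
      _ = ((n : ℝ) - 1) * (ε₁ * σ ^ 2) ^ 2 := by
          congr 1
          rw [Finset.card_erase_of_mem (Finset.mem_univ j), Finset.card_univ, Fintype.card_fin]
          have hn1 : 1 ≤ n := le_trans hd hdn
          rw [Nat.cast_sub hn1, Nat.cast_one]
  have htermj : (lewisF w A j - lewisF w A' j) ^ 2 ≤ B2 ^ 2 := by
    calc (lewisF w A j - lewisF w A' j) ^ 2 = |lewisF w A j - lewisF w A' j| ^ 2 :=
          (sq_abs _).symm
      _ ≤ B2 ^ 2 := pow_le_pow_left₀ (abs_nonneg _) hcoordj 2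
  have hgoal : B2 = ε₁ * (σ + ε₀) ^ 2 +
      ε₀ * (sigmaMin (Matrix.diagonal (fun i => Real.sqrt (w i)) * A) ^ 2)⁻¹ *
        (2 * σ + ε₀) := by
    rw [hB2_def, ← ht_def]
  rw [← hσ_def] at *
  linarith [hterm1, htermj, hgoal ▸ htermj]
end

section
/- Let n ≥ d ≥ 1 and let A, A' ∈ ℝ^{n×d} have full column rank, with rows a_1ᵀ,…,a_nᵀ and a'_1ᵀ,…,a'_nᵀ respectively. Suppose A and A' differ only in the j-th row and ‖a_j − a'_j‖₂ ≤ ε₀. Let c ∈ (0,1] and let w ∈ ℝⁿ satisfy c ≤ w_i ≤ 1 for all i, with W = diag(w). Suppose ε₀ ≤ 0.1·√c·σmin(A), and set ε₁ := 8·c⁻²·κ(A)·σmin(A)⁻³·ε₀. Then for every i ∈ [n] with i ≠ j, |f(w,A)_i − f(w,A')_i| ≤ ε₁·σmax(A)². -/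
open Matrix

section basics
variable {m : Type*} [Fintype m]

lemma l2norm_nonneg (x : m → ℝ) : 0 ≤ l2norm x := Real.sqrt_nonneg _

lemma l2norm_sq (x : m → ℝ) : l2norm x ^ 2 = ∑ i, x i ^ 2 :=
  Real.sq_sqrt (Finset.sum_nonneg fun i _ => sq_nonneg _)

lemma l2norm_eq_zero_iff {x : m → ℝ} : l2norm x = 0 ↔ x = 0 := by
  unfold l2norm
  rw [Real.sqrt_eq_zero (Finset.sum_nonneg fun i _ => sq_nonneg _)]
  constructor
  · intro h
    funext i
    have := (Finset.sum_eq_zero_iff_of_nonneg (fun i _ => sq_nonneg (x i))).1 h i (Finset.mem_univ i)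
    simpa [pow_eq_zero_iff] using this
  · rintro rfl; simp

lemma l2norm_smul (a : ℝ) (x : m → ℝ) : l2norm (a • x) = |a| * l2norm x := by
  unfold l2norm
  rw [show ∑ i, (a • x) i ^ 2 = a ^ 2 * ∑ i, x i ^ 2 by rw [Finset.mul_sum]; congr 1; funext i; simp [mul_pow]]
  rw [Real.sqrt_mul (sq_nonneg a), Real.sqrt_sq_eq_abs]

lemma l2norm_neg (x : m → ℝ) : l2norm (-x) = l2norm x := by
  unfold l2norm; simp

lemma abs_dot_le (x y : m → ℝ) : |x ⬝ᵥ y| ≤ l2norm x * l2norm y := by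
  unfold l2norm dotProduct
  rw [← Real.sqrt_mul (Finset.sum_nonneg fun i _ => sq_nonneg _), ← Real.sqrt_sq_eq_abs]
  exact Real.sqrt_le_sqrt (Finset.sum_mul_sq_le_sq_mul_sq Finset.univ x y)

lemma dot_self_eq (x : m → ℝ) : x ⬝ᵥ x = l2norm x ^ 2 := by
  rw [l2norm_sq]; simp [dotProduct, sq]

lemma l2norm_add_le (x y : m → ℝ) : l2norm (x + y) ≤ l2norm x + l2norm y := by
  have h1 : l2norm (x + y) ^ 2 ≤ (l2norm x + l2norm y) ^ 2 := by
    rw [l2norm_sq]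
    have hd : |x ⬝ᵥ y| ≤ l2norm x * l2norm y := abs_dot_le x y
    have h2 : ∑ i, (x + y) i ^ 2 = (∑ i, x i ^ 2) + 2 * (x ⬝ᵥ y) + ∑ i, y i ^ 2 := by
      simp only [Pi.add_apply, dotProduct, Finset.mul_sum, ← Finset.sum_add_distrib]
      congr 1; funext i; ring
    rw [h2, ← l2norm_sq x, ← l2norm_sq y]
    have := abs_le.1 hd
    nlinarith [l2norm_nonneg x, l2norm_nonneg y]
  have hb : 0 ≤ l2norm x + l2norm y := add_nonneg (l2norm_nonneg x) (l2norm_nonneg y)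
  nlinarith [l2norm_nonneg (x + y)]

lemma abs_apply_le (x : m → ℝ) (i : m) : |x i| ≤ l2norm x := by
  rw [← Real.sqrt_sq_eq_abs]
  apply Real.sqrt_le_sqrt
  exact Finset.single_le_sum (f := fun i => x i ^ 2) (fun i _ => sq_nonneg _) (Finset.mem_univ i)
end basics

section sigma
variable {n d : ℕ}

def sigSet (A : Matrix (Fin n) (Fin d) ℝ) : Set ℝ :=
  {r | ∃ x : Fin d → ℝ, l2norm x = 1 ∧ r = l2norm (A.mulVec x)}

lemma sigmaMax_eq (A : Matrix (Fin n) (Fin d) ℝ) : sigmaMax A = sSup (sigSet A) := rfl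
lemma sigmaMin_eq (A : Matrix (Fin n) (Fin d) ℝ) : sigmaMin A = sInf (sigSet A) := rfl

lemma l2norm_unit (hd : 1 ≤ d) :
    l2norm (fun t : Fin d => if t = ⟨0, hd⟩ then (1:ℝ) else 0) = 1 := by
  unfold l2norm
  rw [show ∑ t : Fin d, (if t = ⟨0, hd⟩ then (1:ℝ) else 0) ^ 2 = 1 by
    rw [Finset.sum_eq_single ⟨0, hd⟩]
    · simp
    · intro b _ hb; simp [hb]
    · simp]
  exact Real.sqrt_one

lemma sigSet_nonempty (hd : 1 ≤ d) (A : Matrix (Fin n) (Fin d) ℝ) : (sigSet A).Nonempty :=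
  ⟨_, _, l2norm_unit hd, rfl⟩

lemma sigSet_bddBelow (A : Matrix (Fin n) (Fin d) ℝ) : BddBelow (sigSet A) :=
  ⟨0, by rintro r ⟨x, hx, rfl⟩; exact l2norm_nonneg _⟩

lemma sigSet_bddAbove (A : Matrix (Fin n) (Fin d) ℝ) : BddAbove (sigSet A) := by
  refine ⟨Real.sqrt (∑ i, ∑ t, A i t ^ 2), ?_⟩
  rintro r ⟨x, hx, rfl⟩
  unfold l2norm
  apply Real.sqrt_le_sqrt
  apply Finset.sum_le_sum
  intro i _
  have h1 : |A.mulVec x i| ≤ l2norm (A i) * l2norm x := by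
    rw [show A.mulVec x i = A i ⬝ᵥ x from rfl]; exact abs_dot_le _ _
  rw [hx, mul_one] at h1
  calc A.mulVec x i ^ 2 = |A.mulVec x i| ^ 2 := (sq_abs _).symm
    _ ≤ l2norm (A i) ^ 2 := by
        exact pow_le_pow_left₀ (abs_nonneg _) h1 2
    _ = ∑ t, A i t ^ 2 := l2norm_sq _

lemma sigmaMin_nonneg (hd : 1 ≤ d) (A : Matrix (Fin n) (Fin d) ℝ) : 0 ≤ sigmaMin A :=
  le_csInf (sigSet_nonempty hd A) (by rintro r ⟨x, hx, rfl⟩; exact l2norm_nonneg _)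

lemma sigmaMin_le_unit (A : Matrix (Fin n) (Fin d) ℝ) {x : Fin d → ℝ} (hx : l2norm x = 1) :
    sigmaMin A ≤ l2norm (A.mulVec x) :=
  csInf_le (sigSet_bddBelow A) ⟨x, hx, rfl⟩

lemma unit_le_sigmaMax (A : Matrix (Fin n) (Fin d) ℝ) {x : Fin d → ℝ} (hx : l2norm x = 1) :
    l2norm (A.mulVec x) ≤ sigmaMax A :=
  le_csSup (sigSet_bddAbove A) ⟨x, hx, rfl⟩

lemma sigmaMax_nonneg (hd : 1 ≤ d) (A : Matrix (Fin n) (Fin d) ℝ) : 0 ≤ sigmaMax A :=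
  le_trans (l2norm_nonneg _) (unit_le_sigmaMax A (l2norm_unit hd))

lemma sigmaMin_le_sigmaMax (hd : 1 ≤ d) (A : Matrix (Fin n) (Fin d) ℝ) :
    sigmaMin A ≤ sigmaMax A :=
  le_trans (sigmaMin_le_unit A (l2norm_unit hd)) (unit_le_sigmaMax A (l2norm_unit hd))

lemma scale_unit {x : Fin d → ℝ} (hx : x ≠ 0) :
    l2norm ((l2norm x)⁻¹ • x) = 1 := by
  have h0 : l2norm x ≠ 0 := fun h => hx (l2norm_eq_zero_iff.1 h)
  have hpos : 0 < l2norm x := lt_of_le_of_ne (l2norm_nonneg x) (Ne.symm h0)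
  rw [l2norm_smul, abs_of_pos (inv_pos.2 hpos), inv_mul_cancel₀ h0]

lemma mulVec_le_sigmaMax (hd : 1 ≤ d) (A : Matrix (Fin n) (Fin d) ℝ) (x : Fin d → ℝ) :
    l2norm (A.mulVec x) ≤ sigmaMax A * l2norm x := by
  by_cases hx : x = 0
  · subst hx; simp [Matrix.mulVec_zero, show l2norm (0 : Fin n → ℝ) = 0 from l2norm_eq_zero_iff.2 rfl,
      show l2norm (0 : Fin d → ℝ) = 0 from l2norm_eq_zero_iff.2 rfl]
  · have h0 : l2norm x ≠ 0 := fun h => hx (l2norm_eq_zero_iff.1 h)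
    have hpos : 0 < l2norm x := lt_of_le_of_ne (l2norm_nonneg x) (Ne.symm h0)
    have key := unit_le_sigmaMax A (scale_unit hx)
    rw [Matrix.mulVec_smul, l2norm_smul, abs_of_pos (inv_pos.2 hpos)] at key
    calc l2norm (A.mulVec x) = l2norm x * ((l2norm x)⁻¹ * l2norm (A.mulVec x)) := by
          field_simp
      _ ≤ l2norm x * sigmaMax A := by
          exact mul_le_mul_of_nonneg_left key (le_of_lt hpos)
      _ = sigmaMax A * l2norm x := mul_comm _ _

lemma sigmaMin_le_mulVec (A : Matrix (Fin n) (Fin d) ℝ) (x : Fin d → ℝ) :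
    sigmaMin A * l2norm x ≤ l2norm (A.mulVec x) := by
  by_cases hx : x = 0
  · subst hx; simp [Matrix.mulVec_zero, show l2norm (0 : Fin n → ℝ) = 0 from l2norm_eq_zero_iff.2 rfl,
      show l2norm (0 : Fin d → ℝ) = 0 from l2norm_eq_zero_iff.2 rfl]
  · have h0 : l2norm x ≠ 0 := fun h => hx (l2norm_eq_zero_iff.1 h)
    have hpos : 0 < l2norm x := lt_of_le_of_ne (l2norm_nonneg x) (Ne.symm h0)
    have key := sigmaMin_le_unit A (scale_unit hx)
    rw [Matrix.mulVec_smul, l2norm_smul, abs_of_pos (inv_pos.2 hpos)] at key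
    calc sigmaMin A * l2norm x ≤ ((l2norm x)⁻¹ * l2norm (A.mulVec x)) * l2norm x := by
          exact mul_le_mul_of_nonneg_right key (le_of_lt hpos)
      _ = l2norm (A.mulVec x) := by field_simp

lemma row_le_sigmaMax (hd : 1 ≤ d) (A : Matrix (Fin n) (Fin d) ℝ) (i : Fin n) :
    l2norm (A i) ≤ sigmaMax A := by
  by_cases h : l2norm (A i) = 0
  · rw [h]; exact sigmaMax_nonneg hd A
  · have hpos : 0 < l2norm (A i) := lt_of_le_of_ne (l2norm_nonneg _) (Ne.symm h)
    have h1 : l2norm (A i) ^ 2 = A.mulVec (A i) i := (dot_self_eq (A i)).symm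
    have h2 : |A.mulVec (A i) i| ≤ l2norm (A.mulVec (A i)) := abs_apply_le _ _
    have h3 := mulVec_le_sigmaMax hd A (A i)
    have h4 : l2norm (A i) ^ 2 ≤ sigmaMax A * l2norm (A i) := by
      calc l2norm (A i) ^ 2 = A.mulVec (A i) i := h1
        _ ≤ |A.mulVec (A i) i| := le_abs_self _
        _ ≤ l2norm (A.mulVec (A i)) := h2
        _ ≤ sigmaMax A * l2norm (A i) := h3
    nlinarith

lemma l2norm_continuous : Continuous (l2norm : (Fin d → ℝ) → ℝ) := by
  unfold l2norm
  exact Real.continuous_sqrt.comp (continuous_finset_sum _ fun i _ => (continuous_apply i).pow 2)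

lemma sigmaMin_pos (hd : 1 ≤ d) (A : Matrix (Fin n) (Fin d) ℝ) (hrank : A.rank = d) :
    0 < sigmaMin A := by
  -- injectivity of mulVec
  have hinj : Function.Injective A.mulVec := by
    have h1 : LinearMap.ker A.mulVecLin = ⊥ := by
      have hr : Module.finrank ℝ (LinearMap.range A.mulVecLin) = d := hrank
      have hd' : Module.finrank ℝ (Fin d → ℝ) = d := by simp
      have := LinearMap.finrank_range_add_finrank_ker A.mulVecLin
      rw [hr, hd'] at this
      have hker : Module.finrank ℝ (LinearMap.ker A.mulVecLin) = 0 := by omega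
      exact Submodule.finrank_eq_zero.1 hker
    intro x y hxy
    have := LinearMap.ker_eq_bot.1 h1
    exact this hxy
  -- the set is the image of the compact unit sphere
  have hKclosed : IsClosed {x : Fin d → ℝ | l2norm x = 1} :=
    isClosed_eq l2norm_continuous continuous_const
  have hKbdd : Bornology.IsBounded {x : Fin d → ℝ | l2norm x = 1} := by
    apply Bornology.IsBounded.subset (Metric.isBounded_closedBall (x := (0 : Fin d → ℝ)) (r := 1))
    intro x hx
    rw [Metric.mem_closedBall, dist_zero_right]
    rw [pi_norm_le_iff_of_nonneg zero_le_one]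
    intro i
    rw [Real.norm_eq_abs]
    calc |x i| ≤ l2norm x := abs_apply_le x i
      _ = 1 := hx
  have hK : IsCompact {x : Fin d → ℝ | l2norm x = 1} :=
    Metric.isCompact_of_isClosed_isBounded hKclosed hKbdd
  have hg : Continuous (fun x : Fin d → ℝ => l2norm (A.mulVec x)) := by
    apply l2norm_continuous.comp
    refine continuous_pi fun i => ?_
    simp only [Matrix.mulVec, dotProduct]
    exact continuous_finset_sum _ fun t _ => continuous_const.mul (continuous_apply t)
  have himg : sigSet A = (fun x : Fin d → ℝ => l2norm (A.mulVec x)) '' {x | l2norm x = 1} := by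
    ext r
    constructor
    · rintro ⟨x, hx, rfl⟩; exact ⟨x, hx, rfl⟩
    · rintro ⟨x, hx, rfl⟩; exact ⟨x, hx, rfl⟩
  have hcomp : IsCompact (sigSet A) := by
    rw [himg]; exact hK.image hg
  have hne : (sigSet A).Nonempty := sigSet_nonempty hd A
  have hmem : sInf (sigSet A) ∈ sigSet A := hcomp.sInf_mem hne
  obtain ⟨x, hx, hval⟩ := hmem
  rw [sigmaMin_eq, hval]
  have hx0 : x ≠ 0 := by
    intro h; rw [h] at hx; rw [l2norm_eq_zero_iff.2 rfl] at hx; norm_num at hx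
  have hAx : A.mulVec x ≠ 0 := by
    intro h
    apply hx0
    apply hinj
    rw [h, Matrix.mulVec_zero]
  have : l2norm (A.mulVec x) ≠ 0 := fun h => hAx (l2norm_eq_zero_iff.1 h)
  exact lt_of_le_of_ne (l2norm_nonneg _) (Ne.symm this)

end sigma

section mat
variable {n d : ℕ}

lemma quad_form (A : Matrix (Fin n) (Fin d) ℝ) (w : Fin n → ℝ) (x : Fin d → ℝ) :
    x ⬝ᵥ (Aᵀ * Matrix.diagonal w * A).mulVec x = ∑ i, w i * (A.mulVec x i) ^ 2 := by
  rw [← Matrix.mulVec_mulVec, ← Matrix.mulVec_mulVec, Matrix.dotProduct_mulVec,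
    Matrix.vecMul_transpose]
  unfold dotProduct
  apply Finset.sum_congr rfl
  intro i _
  rw [Matrix.mulVec_diagonal]
  ring

lemma posdef_of (M : Matrix (Fin d) (Fin d) ℝ) (hsym : Mᵀ = M) {α : ℝ} (hα : 0 < α)
    (hq : ∀ x, α * l2norm x ^ 2 ≤ x ⬝ᵥ M.mulVec x) : M.PosDef := by
  rw [Matrix.posDef_iff_dotProduct_mulVec]
  constructor
  · show Mᴴ = M
    ext p q
    rw [Matrix.conjTranspose_apply, star_trivial]
    exact (congrFun (congrFun hsym q) p).symm
  · intro x hx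
    have h0 : l2norm x ≠ 0 := fun h => hx (l2norm_eq_zero_iff.1 h)
    have hpos : 0 < l2norm x := lt_of_le_of_ne (l2norm_nonneg x) (Ne.symm h0)
    have := hq x
    have hsx : star x = x := by funext i; simp
    rw [hsx]
    calc (0:ℝ) < α * l2norm x ^ 2 := by positivity
      _ ≤ x ⬝ᵥ M.mulVec x := hq x

lemma inv_norm_bound (M : Matrix (Fin d) (Fin d) ℝ) (hdet : IsUnit M.det) {α : ℝ} (hα : 0 < α)
    (hq : ∀ x, α * l2norm x ^ 2 ≤ x ⬝ᵥ M.mulVec x) (z : Fin d → ℝ) :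
    l2norm (M⁻¹.mulVec z) ≤ α⁻¹ * l2norm z := by
  set y := M⁻¹.mulVec z with hy
  have hMy : M.mulVec y = z := by
    rw [hy, Matrix.mulVec_mulVec, Matrix.mul_nonsing_inv M hdet, Matrix.one_mulVec]
  have h1 : α * l2norm y ^ 2 ≤ y ⬝ᵥ z := by rw [← hMy]; exact hq y
  have h2 : y ⬝ᵥ z ≤ l2norm y * l2norm z := le_trans (le_abs_self _) (abs_dot_le y z)
  by_cases h0 : l2norm y = 0
  · rw [h0]
    exact mul_nonneg (inv_nonneg.2 hα.le) (l2norm_nonneg z)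
  · have hpos : 0 < l2norm y := lt_of_le_of_ne (l2norm_nonneg y) (Ne.symm h0)
    rw [le_inv_mul_iff₀ hα]
    nlinarith

lemma inv_diff (M N : Matrix (Fin d) (Fin d) ℝ) (hM : IsUnit M.det) (hN : IsUnit N.det) :
    M⁻¹ - N⁻¹ = M⁻¹ * (N - M) * N⁻¹ := by
  rw [Matrix.mul_sub, Matrix.sub_mul, Matrix.nonsing_inv_mul M hM, Matrix.mul_assoc,
    Matrix.mul_nonsing_inv N hN, Matrix.mul_one, Matrix.one_mul]

lemma dot_mulVec_symm (B : Matrix (Fin d) (Fin d) ℝ) (hB : Bᵀ = B) (a v : Fin d → ℝ) :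
    a ⬝ᵥ B.mulVec v = B.mulVec a ⬝ᵥ v := by
  have h : a ᵥ* B = Bᵀ *ᵥ a := by
    nth_rewrite 1 [← Matrix.transpose_transpose B]
    exact Matrix.vecMul_transpose _ _
  rw [Matrix.dotProduct_mulVec, h, hB]

lemma M_entry (A : Matrix (Fin n) (Fin d) ℝ) (w : Fin n → ℝ) (p q : Fin d) :
    (Aᵀ * Matrix.diagonal w * A) p q = ∑ i, w i * (A i p * A i q) := by
  rw [Matrix.mul_apply]
  apply Finset.sum_congr rfl
  intro i _
  rw [Matrix.mul_diagonal, Matrix.transpose_apply]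
  ring

lemma deltaM_mulVec (A A' : Matrix (Fin n) (Fin d) ℝ) (w : Fin n → ℝ) (j : Fin n)
    (hrow : ∀ i : Fin n, i ≠ j → A i = A' i) (v : Fin d → ℝ) :
    ((A'ᵀ * Matrix.diagonal w * A') - (Aᵀ * Matrix.diagonal w * A)).mulVec v =
      (w j * ((A' j - A j) ⬝ᵥ v)) • A' j + (w j * (A j ⬝ᵥ v)) • (A' j - A j) := by
  funext p
  show ∑ q, ((A'ᵀ * Matrix.diagonal w * A') - (Aᵀ * Matrix.diagonal w * A)) p q * v q = _
  have hentry : ∀ q, ((A'ᵀ * Matrix.diagonal w * A') - (Aᵀ * Matrix.diagonal w * A)) p q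
      = w j * (A' j p * A' j q - A j p * A j q) := by
    intro q
    rw [Matrix.sub_apply, M_entry, M_entry, ← Finset.sum_sub_distrib,
      Finset.sum_eq_single j (fun b _ hb => by rw [hrow b hb]; ring) (by simp)]
    ring
  calc ∑ q, ((A'ᵀ * Matrix.diagonal w * A') - (Aᵀ * Matrix.diagonal w * A)) p q * v q
      = ∑ q, (w j * ((A' j q - A j q) * v q) * A' j p + w j * (A j q * v q) * (A' j p - A j p)) := by
        apply Finset.sum_congr rfl
        intro q _
        rw [hentry q]; ring
    _ = _ := by
        simp only [Pi.add_apply, Pi.smul_apply, Pi.sub_apply, smul_eq_mul, dotProduct,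
          Finset.mul_sum, Finset.sum_mul, ← Finset.sum_add_distrib]

lemma single_row_l2norm (y : Fin n → ℝ) (j : Fin n) (h : ∀ i, i ≠ j → y i = 0) :
    l2norm y = |y j| := by
  unfold l2norm
  rw [Finset.sum_eq_single j (fun b _ hb => by rw [h b hb]; ring) (by simp),
    Real.sqrt_sq_eq_abs]

end mat

lemma final_num (c σ S e : ℝ) (hc : 0 < c) (hσ : 0 < σ) (he : 0 ≤ e) (hS : 0 ≤ S) :
    ((c * σ ^ 2)⁻¹ * S) * (e * (2.1 * S) * ((c * (0.9 * σ) ^ 2)⁻¹ * S))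
      ≤ 8 * c⁻¹ ^ 2 * (S / σ) * (σ ^ 3)⁻¹ * e * S ^ 2 := by
  have hc' : c ≠ 0 := hc.ne'
  have hσ' : σ ≠ 0 := hσ.ne'
  have key : ((c * σ ^ 2)⁻¹ * S) * (e * (2.1 * S) * ((c * (0.9 * σ) ^ 2)⁻¹ * S))
      = (2.1 / 0.81) * (c⁻¹ ^ 2 * σ⁻¹ ^ 4 * e * S ^ 3) := by
    field_simp
    ring
  have key2 : 8 * c⁻¹ ^ 2 * (S / σ) * (σ ^ 3)⁻¹ * e * S ^ 2
      = 8 * (c⁻¹ ^ 2 * σ⁻¹ ^ 4 * e * S ^ 3) := by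
    field_simp
  rw [key, key2]
  have hm : (0:ℝ) ≤ c⁻¹ ^ 2 * σ⁻¹ ^ 4 * e * S ^ 3 := by positivity
  nlinarith

lemma combine_bound {x1 y1 x2 y2 e s uu : ℝ} (h1 : x1 ≤ e * uu) (h2 : y1 ≤ 1.1 * s)
    (h3 : x2 ≤ s * uu) (h4 : y2 ≤ e) (hx1 : 0 ≤ x1) (hx2 : 0 ≤ x2)
    (he : 0 ≤ e) (hs : 0 ≤ s) (hu : 0 ≤ uu) : x1 * y1 + x2 * y2 ≤ e * (2.1 * s) * uu := by
  nlinarith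

theorem lewis_weights_perturbation_off_row
    (n d : ℕ) (hd : 1 ≤ d) (hdn : d ≤ n)
    (A A' : Matrix (Fin n) (Fin d) ℝ)
    (hrankA : A.rank = d) (hrankA' : A'.rank = d)
    (j : Fin n) (ε₀ : ℝ)
    (hrow : ∀ i : Fin n, i ≠ j → A i = A' i)
    (hj : l2norm (A j - A' j) ≤ ε₀)
    (c : ℝ) (hc0 : 0 < c) (hc1 : c ≤ 1)
    (w : Fin n → ℝ) (hw : ∀ i, c ≤ w i ∧ w i ≤ 1)
    (hε₀ : ε₀ ≤ 0.1 * Real.sqrt c * sigmaMin A)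
    (ε₁ : ℝ) (hε₁ : ε₁ = 8 * c⁻¹ ^ 2 * kappa A * (sigmaMin A ^ 3)⁻¹ * ε₀) :
    ∀ i : Fin n, i ≠ j →
      |lewisF w A i - lewisF w A' i| ≤ ε₁ * sigmaMax A ^ 2 := by
  intro i hij
  have hσ : 0 < sigmaMin A := sigmaMin_pos hd A hrankA
  have hsigLe : sigmaMin A ≤ sigmaMax A := sigmaMin_le_sigmaMax hd A
  have hSig : 0 < sigmaMax A := lt_of_lt_of_le hσ hsigLe
  have hε₀0 : 0 ≤ ε₀ := le_trans (l2norm_nonneg _) hj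
  have hsc : Real.sqrt c ≤ 1 := Real.sqrt_le_one.2 hc1
  have hsc0 : 0 ≤ Real.sqrt c := Real.sqrt_nonneg c
  have hε₀σ : ε₀ ≤ 0.1 * sigmaMin A := by nlinarith
  -- quadratic form lower bound for M
  have hqM : ∀ x : Fin d → ℝ, (c * sigmaMin A ^ 2) * l2norm x ^ 2
      ≤ x ⬝ᵥ (Aᵀ * Matrix.diagonal w * A).mulVec x := by
    intro x
    rw [quad_form]
    have h1 : (c * sigmaMin A ^ 2) * l2norm x ^ 2 ≤ c * l2norm (A.mulVec x) ^ 2 := by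
      have hle := sigmaMin_le_mulVec A x
      have h0 : 0 ≤ sigmaMin A * l2norm x := mul_nonneg hσ.le (l2norm_nonneg x)
      have hsq := mul_le_mul hle hle h0 (l2norm_nonneg _)
      nlinarith
    refine h1.trans ?_
    rw [l2norm_sq, Finset.mul_sum]
    apply Finset.sum_le_sum
    intro t _
    exact mul_le_mul_of_nonneg_right (hw t).1 (sq_nonneg _)
  -- lower bound on l2norm (A'.mulVec x)
  have hA'x : ∀ x : Fin d → ℝ, (0.9 * sigmaMin A) * l2norm x ≤ l2norm (A'.mulVec x) := by
    intro x
    have hsplit : A.mulVec x = A'.mulVec x + (A - A').mulVec x := by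
      rw [Matrix.sub_mulVec]; abel
    have htri : l2norm (A.mulVec x) ≤ l2norm (A'.mulVec x) + l2norm ((A - A').mulVec x) := by
      rw [hsplit]; exact l2norm_add_le _ _
    have hzero : ∀ i' : Fin n, i' ≠ j → (A - A').mulVec x i' = 0 := by
      intro i' hi'
      show (A - A') i' ⬝ᵥ x = 0
      have : (A - A') i' = 0 := by
        funext q; simp [Matrix.sub_apply, congrFun (hrow i' hi') q]
      rw [this, zero_dotProduct]
    have hsing : l2norm ((A - A').mulVec x) = |(A - A').mulVec x j| :=
      single_row_l2norm _ j hzero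
    have hjval : |(A - A').mulVec x j| ≤ ε₀ * l2norm x := by
      show |(A - A') j ⬝ᵥ x| ≤ ε₀ * l2norm x
      have h1 : |(A - A') j ⬝ᵥ x| ≤ l2norm ((A - A') j) * l2norm x := abs_dot_le _ _
      have h2 : (A - A') j = A j - A' j := rfl
      rw [h2] at h1
      exact h1.trans (mul_le_mul_of_nonneg_right hj (l2norm_nonneg x))
    have hlow := sigmaMin_le_mulVec A x
    have hx0 := l2norm_nonneg x
    nlinarith [hsing, htri]
  have hqM' : ∀ x : Fin d → ℝ, (c * (0.9 * sigmaMin A) ^ 2) * l2norm x ^ 2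
      ≤ x ⬝ᵥ (A'ᵀ * Matrix.diagonal w * A').mulVec x := by
    intro x
    rw [quad_form]
    have h1 : (c * (0.9 * sigmaMin A) ^ 2) * l2norm x ^ 2 ≤ c * l2norm (A'.mulVec x) ^ 2 := by
      have hle := hA'x x
      have h0 : 0 ≤ 0.9 * sigmaMin A * l2norm x :=
        mul_nonneg (mul_nonneg (by norm_num) hσ.le) (l2norm_nonneg x)
      have hsq := mul_le_mul hle hle h0 (l2norm_nonneg _)
      nlinarith
    refine h1.trans ?_
    rw [l2norm_sq, Finset.mul_sum]
    apply Finset.sum_le_sum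
    intro t _
    exact mul_le_mul_of_nonneg_right (hw t).1 (sq_nonneg _)
  -- symmetry
  have hsymM : (Aᵀ * Matrix.diagonal w * A)ᵀ = Aᵀ * Matrix.diagonal w * A := by
    simp [Matrix.transpose_mul, Matrix.transpose_transpose, Matrix.diagonal_transpose,
      Matrix.mul_assoc]
  have hsymM' : (A'ᵀ * Matrix.diagonal w * A')ᵀ = A'ᵀ * Matrix.diagonal w * A' := by
    simp [Matrix.transpose_mul, Matrix.transpose_transpose, Matrix.diagonal_transpose,
      Matrix.mul_assoc]
  have hα : (0:ℝ) < c * sigmaMin A ^ 2 := by positivity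
  have hα' : (0:ℝ) < c * (0.9 * sigmaMin A) ^ 2 := by positivity
  have hdetM : IsUnit (Aᵀ * Matrix.diagonal w * A).det :=
    isUnit_iff_ne_zero.2 (posdef_of _ hsymM hα hqM).det_pos.ne'
  have hdetM' : IsUnit (A'ᵀ * Matrix.diagonal w * A').det :=
    isUnit_iff_ne_zero.2 (posdef_of _ hsymM' hα' hqM').det_pos.ne'
  have hsymInv : ((Aᵀ * Matrix.diagonal w * A)⁻¹)ᵀ = (Aᵀ * Matrix.diagonal w * A)⁻¹ := by
    rw [Matrix.transpose_nonsing_inv, hsymM]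
  -- abbreviations
  set a : Fin d → ℝ := A i with ha
  set u : Fin d → ℝ := ((A'ᵀ * Matrix.diagonal w * A')⁻¹).mulVec a with hu
  have hAi : A i = A' i := hrow i hij
  -- difference formula
  have hdiff : lewisF w A i - lewisF w A' i
      = w i * (((Aᵀ * Matrix.diagonal w * A)⁻¹).mulVec a ⬝ᵥ
          ((A'ᵀ * Matrix.diagonal w * A' - Aᵀ * Matrix.diagonal w * A).mulVec u)) := by
    unfold lewisF
    rw [← hAi, ← ha, ← mul_sub]
    congr 1
    rw [← dotProduct_sub, ← Matrix.sub_mulVec,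
      inv_diff _ _ hdetM hdetM', ← Matrix.mulVec_mulVec, ← Matrix.mulVec_mulVec,
      dot_mulVec_symm _ hsymInv, hu]
  -- bounds
  have hwi := hw i
  have hwj := hw j
  have hrowa : l2norm a ≤ sigmaMax A := row_le_sigmaMax hd A i
  have hrowj : l2norm (A j) ≤ sigmaMax A := row_le_sigmaMax hd A j
  have hδ : l2norm (A' j - A j) ≤ ε₀ := by
    have : A' j - A j = -(A j - A' j) := by abel
    rw [this, show l2norm (-(A j - A' j)) = l2norm (A j - A' j) by
      have := l2norm_smul (-1 : ℝ) (A j - A' j)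
      simpa using this]
    exact hj
  have hrowj' : l2norm (A' j) ≤ 1.1 * sigmaMax A := by
    have h1 : A j + (A' j - A j) = A' j := by abel
    have h2 := l2norm_add_le (A j) (A' j - A j)
    rw [h1] at h2
    nlinarith
  have hMa : l2norm (((Aᵀ * Matrix.diagonal w * A)⁻¹).mulVec a)
      ≤ (c * sigmaMin A ^ 2)⁻¹ * sigmaMax A := by
    refine (inv_norm_bound _ hdetM hα hqM a).trans ?_
    exact mul_le_mul_of_nonneg_left hrowa (inv_nonneg.2 hα.le)
  have hu_bound : l2norm u ≤ (c * (0.9 * sigmaMin A) ^ 2)⁻¹ * sigmaMax A := by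
    refine (inv_norm_bound _ hdetM' hα' hqM' a).trans ?_
    exact mul_le_mul_of_nonneg_left hrowa (inv_nonneg.2 hα'.le)
  have hu0 : 0 ≤ l2norm u := l2norm_nonneg u
  -- bound on the perturbation term
  have hdm : l2norm ((A'ᵀ * Matrix.diagonal w * A' - Aᵀ * Matrix.diagonal w * A).mulVec u)
      ≤ ε₀ * (2.1 * sigmaMax A) * l2norm u := by
    rw [deltaM_mulVec A A' w j hrow u]
    refine (l2norm_add_le _ _).trans ?_
    rw [l2norm_smul, l2norm_smul]
    have hd1 : |(A' j - A j) ⬝ᵥ u| ≤ ε₀ * l2norm u :=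
      (abs_dot_le _ _).trans (mul_le_mul_of_nonneg_right hδ hu0)
    have hd2 : |A j ⬝ᵥ u| ≤ sigmaMax A * l2norm u :=
      (abs_dot_le _ _).trans (mul_le_mul_of_nonneg_right hrowj hu0)
    have hwj0 : 0 < w j := lt_of_lt_of_le hc0 hwj.1
    have hc1' : |w j * ((A' j - A j) ⬝ᵥ u)| ≤ ε₀ * l2norm u := by
      rw [abs_mul, abs_of_pos hwj0]
      calc w j * |(A' j - A j) ⬝ᵥ u| ≤ 1 * (ε₀ * l2norm u) :=
            mul_le_mul hwj.2 hd1 (abs_nonneg _) zero_le_one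
        _ = ε₀ * l2norm u := one_mul _
    have hc2' : |w j * (A j ⬝ᵥ u)| ≤ sigmaMax A * l2norm u := by
      rw [abs_mul, abs_of_pos hwj0]
      calc w j * |A j ⬝ᵥ u| ≤ 1 * (sigmaMax A * l2norm u) :=
            mul_le_mul hwj.2 hd2 (abs_nonneg _) zero_le_one
        _ = _ := one_mul _
    exact combine_bound hc1' hrowj' hc2' hδ (abs_nonneg _) (abs_nonneg _) hε₀0 hSig.le hu0
  -- put everything together
  have hwi0 : 0 < w i := lt_of_lt_of_le hc0 hwi.1
  have hinner : |((Aᵀ * Matrix.diagonal w * A)⁻¹).mulVec a ⬝ᵥ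
      ((A'ᵀ * Matrix.diagonal w * A' - Aᵀ * Matrix.diagonal w * A).mulVec u)|
      ≤ ((c * sigmaMin A ^ 2)⁻¹ * sigmaMax A) *
        (ε₀ * (2.1 * sigmaMax A) * ((c * (0.9 * sigmaMin A) ^ 2)⁻¹ * sigmaMax A)) := by
    refine (abs_dot_le _ _).trans ?_
    have hnn : 0 ≤ l2norm (((Aᵀ * Matrix.diagonal w * A)⁻¹).mulVec a) := l2norm_nonneg _
    have hdm2 : l2norm ((A'ᵀ * Matrix.diagonal w * A' - Aᵀ * Matrix.diagonal w * A).mulVec u)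
        ≤ ε₀ * (2.1 * sigmaMax A) * ((c * (0.9 * sigmaMin A) ^ 2)⁻¹ * sigmaMax A) := by
      refine hdm.trans ?_
      exact mul_le_mul_of_nonneg_left hu_bound (by positivity)
    exact mul_le_mul hMa hdm2 (l2norm_nonneg _) (by positivity)
  have hfinal : |lewisF w A i - lewisF w A' i|
      ≤ ((c * sigmaMin A ^ 2)⁻¹ * sigmaMax A) *
        (ε₀ * (2.1 * sigmaMax A) * ((c * (0.9 * sigmaMin A) ^ 2)⁻¹ * sigmaMax A)) := by
    rw [hdiff, abs_mul, abs_of_pos hwi0]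
    calc w i * |_| ≤ 1 * (((c * sigmaMin A ^ 2)⁻¹ * sigmaMax A) *
        (ε₀ * (2.1 * sigmaMax A) * ((c * (0.9 * sigmaMin A) ^ 2)⁻¹ * sigmaMax A))) :=
          mul_le_mul hwi.2 hinner (abs_nonneg _) zero_le_one
      _ = _ := one_mul _
  refine hfinal.trans ?_
  rw [hε₁]
  unfold kappa
  exact final_num c (sigmaMin A) (sigmaMax A) ε₀ hc0 hσ hε₀0 hSig.le
end

section
/- Let A, B ∈ ℝ^{n×d} with A of full column rank. If ‖A − B‖ ≤ ε₀ and ε₀ ≤ 0.1·σmin(A), then ‖(AᵀA)^{−1} − (BᵀB)^{−1}‖ ≤ 8·κ(A)·σmin(A)⁻³·ε₀. -/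
open Matrix

open scoped Matrix.Norms.L2Operator

namespace PGI

variable {m k : Type*} [Fintype m] [Fintype k] [DecidableEq k] [DecidableEq m]

/-- The continuous linear map on Euclidean spaces induced by a matrix. -/
noncomputable def cmap (A : Matrix m k ℝ) :
    EuclideanSpace ℝ k →L[ℝ] EuclideanSpace ℝ m :=
  LinearMap.toContinuousLinearMap (Matrix.toEuclideanLin A)

lemma cmap_apply (A : Matrix m k ℝ) (x : EuclideanSpace ℝ k) :
    cmap A x = (WithLp.equiv 2 (m → ℝ)).symm (A.mulVec (WithLp.equiv 2 (k → ℝ) x)) := rfl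

lemma l2norm_eq (x : k → ℝ) : l2norm x = ‖(WithLp.equiv 2 (k → ℝ)).symm x‖ := by
  rw [EuclideanSpace.norm_eq, l2norm]
  congr 1
  refine Finset.sum_congr rfl fun i _ => ?_
  rw [Real.norm_eq_abs, sq_abs]
  rfl

lemma l2norm_cmap (A : Matrix m k ℝ) (x : EuclideanSpace ℝ k) :
    l2norm (A.mulVec (WithLp.equiv 2 (k → ℝ) x)) = ‖cmap A x‖ := by
  rw [l2norm_eq, cmap_apply]

/-- The set defining specNorm/sigmaMin, as the image of the unit sphere. -/
lemma set_eq (A : Matrix m k ℝ) :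
    {r | ∃ x : k → ℝ, l2norm x = 1 ∧ r = l2norm (A.mulVec x)} =
      (fun y : EuclideanSpace ℝ k => ‖cmap A y‖) '' Metric.sphere 0 1 := by
  ext r
  constructor
  · rintro ⟨x, hx, rfl⟩
    refine ⟨(WithLp.equiv 2 (k → ℝ)).symm x, ?_, ?_⟩
    · rw [mem_sphere_zero_iff_norm, ← l2norm_eq, hx]
    · show ‖cmap A ((WithLp.equiv 2 (k → ℝ)).symm x)‖ = l2norm (A.mulVec x)
      rw [← l2norm_cmap]
      simp
  · rintro ⟨y, hy, rfl⟩
    refine ⟨WithLp.equiv 2 (k → ℝ) y, ?_, ?_⟩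
    · rw [l2norm_eq]
      simpa using (mem_sphere_zero_iff_norm.mp hy)
    · rw [l2norm_cmap]

lemma bddAbove_set (A : Matrix m k ℝ) :
    BddAbove {r | ∃ x : k → ℝ, l2norm x = 1 ∧ r = l2norm (A.mulVec x)} := by
  rw [set_eq]
  refine ⟨‖cmap A‖, ?_⟩
  rintro r ⟨y, hy, rfl⟩
  calc ‖cmap A y‖ ≤ ‖cmap A‖ * ‖y‖ := (cmap A).le_opNorm y
    _ = ‖cmap A‖ := by rw [mem_sphere_zero_iff_norm.mp hy, mul_one]

lemma set_nonempty [Nonempty k] (A : Matrix m k ℝ) :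
    {r | ∃ x : k → ℝ, l2norm x = 1 ∧ r = l2norm (A.mulVec x)}.Nonempty := by
  rw [set_eq]
  exact ⟨_, ⟨EuclideanSpace.single (Classical.arbitrary k) (1 : ℝ),
    by simp [mem_sphere_zero_iff_norm], rfl⟩⟩

lemma specNorm_eq [Nonempty k] (A : Matrix m k ℝ) : specNorm A = ‖A‖ := by
  have hset := set_eq A
  have key : ‖A‖ = ‖cmap A‖ := rfl
  rw [specNorm, key]
  apply le_antisymm
  · apply csSup_le (set_nonempty A)
    rintro r hr
    rw [hset] at hr
    obtain ⟨y, hy, rfl⟩ := hr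
    calc ‖cmap A y‖ ≤ ‖cmap A‖ * ‖y‖ := (cmap A).le_opNorm y
      _ = ‖cmap A‖ := by rw [mem_sphere_zero_iff_norm.mp hy, mul_one]
  · have h0 : (0:ℝ) ≤ sSup {r | ∃ x : k → ℝ, l2norm x = 1 ∧ r = l2norm (A.mulVec x)} := by
      obtain ⟨r, hr⟩ := set_nonempty A
      refine le_trans ?_ (le_csSup (bddAbove_set A) hr)
      rw [hset] at hr
      obtain ⟨y, _, rfl⟩ := hr
      positivity
    apply ContinuousLinearMap.opNorm_le_bound _ h0
    intro x
    rcases eq_or_ne x 0 with rfl | hx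
    · simp
    · have hnx : (0:ℝ) < ‖x‖ := norm_pos_iff.mpr hx
      set u : EuclideanSpace ℝ k := ‖x‖⁻¹ • x with hu
      have hu1 : ‖u‖ = 1 := by
        rw [hu, norm_smul, norm_inv, norm_norm, inv_mul_cancel₀ hnx.ne']
      have hmem : ‖cmap A u‖ ∈
          {r | ∃ x : k → ℝ, l2norm x = 1 ∧ r = l2norm (A.mulVec x)} := by
        rw [hset]
        exact ⟨u, mem_sphere_zero_iff_norm.mpr hu1, rfl⟩
      have hle := le_csSup (bddAbove_set A) hmem
      have : ‖cmap A u‖ = ‖x‖⁻¹ * ‖cmap A x‖ := by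
        rw [hu, (cmap A).map_smul, norm_smul, norm_inv, norm_norm]
      rw [this] at hle
      calc ‖cmap A x‖ = ‖x‖ * (‖x‖⁻¹ * ‖cmap A x‖) := by field_simp
        _ ≤ ‖x‖ * sSup _ := by
            exact mul_le_mul_of_nonneg_left hle hnx.le
        _ = _ := mul_comm _ _

lemma sigmaMin_nonneg (A : Matrix m k ℝ) : 0 ≤ sigmaMin A := by
  apply Real.sInf_nonneg
  rintro r ⟨x, _, rfl⟩
  exact Real.sqrt_nonneg _

lemma bddBelow_set (A : Matrix m k ℝ) :
    BddBelow {r | ∃ x : k → ℝ, l2norm x = 1 ∧ r = l2norm (A.mulVec x)} := by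
  refine ⟨0, ?_⟩
  rintro r ⟨x, _, rfl⟩
  exact Real.sqrt_nonneg _

lemma sigmaMin_le (A : Matrix m k ℝ) {y : EuclideanSpace ℝ k} (hy : ‖y‖ = 1) :
    sigmaMin A ≤ ‖cmap A y‖ := by
  apply csInf_le (bddBelow_set A)
  rw [set_eq]
  exact ⟨y, mem_sphere_zero_iff_norm.mpr hy, rfl⟩

lemma le_sigmaMin [Nonempty k] (A : Matrix m k ℝ) {c : ℝ}
    (h : ∀ y : EuclideanSpace ℝ k, ‖y‖ = 1 → c ≤ ‖cmap A y‖) : c ≤ sigmaMin A := by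
  apply le_csInf (set_nonempty A)
  intro r hr
  rw [set_eq] at hr
  obtain ⟨y, hy, rfl⟩ := hr
  exact h y (mem_sphere_zero_iff_norm.mp hy)

lemma sigmaMin_mulVec (A : Matrix m k ℝ) (x : EuclideanSpace ℝ k) :
    sigmaMin A * ‖x‖ ≤ ‖cmap A x‖ := by
  rcases eq_or_ne x 0 with rfl | hx
  · simp
  · have hnx : (0:ℝ) < ‖x‖ := norm_pos_iff.mpr hx
    set u : EuclideanSpace ℝ k := ‖x‖⁻¹ • x with hu
    have hu1 : ‖u‖ = 1 := by
      rw [hu, norm_smul, norm_inv, norm_norm, inv_mul_cancel₀ hnx.ne']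
    have h1 := sigmaMin_le A hu1
    have h2 : ‖cmap A u‖ = ‖x‖⁻¹ * ‖cmap A x‖ := by
      rw [hu, (cmap A).map_smul, norm_smul, norm_inv, norm_norm]
    rw [h2] at h1
    calc sigmaMin A * ‖x‖ ≤ (‖x‖⁻¹ * ‖cmap A x‖) * ‖x‖ :=
          mul_le_mul_of_nonneg_right h1 hnx.le
      _ = ‖cmap A x‖ := by field_simp

lemma sigmaMin_pos {n d : ℕ} (A : Matrix (Fin n) (Fin d) ℝ) [Nonempty (Fin d)]
    (hrank : A.rank = d) : 0 < sigmaMin A := by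
  -- the infimum is attained since the sphere is compact
  have hcomp : IsCompact ((fun y : EuclideanSpace ℝ (Fin d) => ‖cmap A y‖) ''
      Metric.sphere 0 1) :=
    (isCompact_sphere 0 1).image ((cmap A).continuous.norm)
  have hne : ((fun y : EuclideanSpace ℝ (Fin d) => ‖cmap A y‖) ''
      Metric.sphere 0 1).Nonempty := by
    rw [← set_eq]; exact set_nonempty A
  have hmem := hcomp.sInf_mem hne
  rw [← set_eq] at hmem
  obtain ⟨y, hy, hmin⟩ := (set_eq A ▸ hmem)
  rcases lt_or_eq_of_le (sigmaMin_nonneg A) with h | h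
  · exact h
  · exfalso
    -- sigmaMin A = 0, so cmap A y = 0 with ‖y‖ = 1
    have hy1 : ‖y‖ = 1 := mem_sphere_zero_iff_norm.mp hy
    have hzero : cmap A y = 0 := by
      have : ‖cmap A y‖ = 0 := by
        show (fun y => ‖cmap A y‖) y = 0
        rw [hmin, ← set_eq, ← sigmaMin, ← h]
      exact norm_eq_zero.mp this
    -- injectivity of mulVecLin from rank
    have hinj : Function.Injective A.mulVecLin := by
      rw [← LinearMap.ker_eq_bot]
      have hrk : Module.finrank ℝ (LinearMap.range A.mulVecLin) = d := hrank
      have := A.mulVecLin.finrank_range_add_finrank_ker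
      rw [hrk] at this
      simp only [Module.finrank_fintype_fun_eq_card, Fintype.card_fin] at this
      have hker : Module.finrank ℝ (LinearMap.ker A.mulVecLin) = 0 := by omega
      exact Submodule.finrank_eq_zero.mp hker
    have hAy : A.mulVec (WithLp.equiv 2 (Fin d → ℝ) y) = 0 := by
      have := congrArg (WithLp.equiv 2 (Fin n → ℝ)) hzero
      simpa [cmap_apply] using this
    have : (WithLp.equiv 2 (Fin d → ℝ)) y = 0 := by
      apply hinj
      simpa [Matrix.mulVecLin] using hAy
    have : y = 0 := by
      simpa using congrArg (WithLp.equiv 2 (Fin d → ℝ)).symm this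
    rw [this] at hy1
    simp at hy1


lemma set_empty' [IsEmpty k] (A : Matrix m k ℝ) :
    {r | ∃ x : k → ℝ, l2norm x = 1 ∧ r = l2norm (A.mulVec x)} = ∅ := by
  ext r
  simp only [Set.mem_setOf_eq, Set.mem_empty_iff_false, iff_false, not_exists, not_and]
  intro x hx
  exfalso
  rw [l2norm] at hx
  simp [Finset.sum_of_isEmpty] at hx

lemma inner_eq_dot (u v : EuclideanSpace ℝ k) :
    (inner ℝ u v : ℝ) = (WithLp.equiv 2 (k → ℝ) u) ⬝ᵥ (WithLp.equiv 2 (k → ℝ) v) := by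
  rw [PiLp.inner_apply, dotProduct]
  simp [RCLike.inner_apply, mul_comm]

lemma dot_gram (A : Matrix m k ℝ) (v : k → ℝ) :
    ((Aᵀ * A).mulVec v) ⬝ᵥ v = (A.mulVec v) ⬝ᵥ (A.mulVec v) := by
  rw [← Matrix.mulVec_mulVec, dotProduct_comm, Matrix.dotProduct_mulVec,
    Matrix.vecMul_transpose]

lemma norm_cmap_sq (A : Matrix m k ℝ) (x : EuclideanSpace ℝ k) :
    ‖cmap A x‖ ^ 2 =
      (A.mulVec (WithLp.equiv 2 (k → ℝ) x)) ⬝ᵥ (A.mulVec (WithLp.equiv 2 (k → ℝ) x)) := by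
  rw [← real_inner_self_eq_norm_sq, inner_eq_dot, cmap_apply]
  simp

lemma le_opNorm' (A : Matrix m k ℝ) (x : EuclideanSpace ℝ k) :
    ‖cmap A x‖ ≤ ‖A‖ * ‖x‖ := (cmap A).le_opNorm x

lemma opNorm_le {A : Matrix m k ℝ} {c : ℝ} (hc : 0 ≤ c)
    (h : ∀ x : EuclideanSpace ℝ k, ‖cmap A x‖ ≤ c * ‖x‖) : ‖A‖ ≤ c := by
  have : ‖A‖ = ‖cmap A‖ := rfl
  rw [this]
  exact ContinuousLinearMap.opNorm_le_bound _ hc h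

lemma gram_isUnit {A : Matrix m k ℝ} {c : ℝ} (hc : 0 < c)
    (h : ∀ x : EuclideanSpace ℝ k, c * ‖x‖ ≤ ‖cmap A x‖) : IsUnit (Aᵀ * A) := by
  rw [← Matrix.mulVec_injective_iff_isUnit]
  intro v w hvw
  have hsub : (Aᵀ * A).mulVec (v - w) = 0 := by
    rw [Matrix.mulVec_sub, hvw, sub_self]
  set u : EuclideanSpace ℝ k := (WithLp.equiv 2 (k → ℝ)).symm (v - w) with hu
  have hequiv : WithLp.equiv 2 (k → ℝ) u = v - w := by simp [hu]
  have hzero : ‖cmap A u‖ ^ 2 = 0 := by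
    rw [norm_cmap_sq, hequiv, ← dot_gram, hsub, zero_dotProduct]
  have h1 := h u
  have h2 : ‖cmap A u‖ = 0 := by
    have := sq_eq_zero_iff.mp hzero
    exact this
  rw [h2] at h1
  have hu0 : ‖u‖ = 0 := by
    nlinarith [norm_nonneg u]
  have : u = 0 := norm_eq_zero.mp hu0
  have : v - w = 0 := by
    rw [← hequiv, this]; simp
  exact sub_eq_zero.mp this


lemma gram_inv_norm_le {A : Matrix m k ℝ} {c : ℝ} (hc : 0 < c)
    (h : ∀ x : EuclideanSpace ℝ k, c * ‖x‖ ≤ ‖cmap A x‖) :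
    ‖(Aᵀ * A)⁻¹‖ ≤ (c ^ 2)⁻¹ := by
  have hU : IsUnit (Aᵀ * A) := gram_isUnit hc h
  have hdet : IsUnit (Aᵀ * A).det := (Matrix.isUnit_iff_isUnit_det _).mp hU
  apply opNorm_le (by positivity)
  intro y
  set x : EuclideanSpace ℝ k := cmap (Aᵀ * A)⁻¹ y with hx
  show ‖x‖ ≤ (c ^ 2)⁻¹ * ‖y‖
  set xv : k → ℝ := WithLp.equiv 2 (k → ℝ) x with hxv
  have hMx : (Aᵀ * A).mulVec xv = WithLp.equiv 2 (k → ℝ) y := by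
    rw [hxv, hx, cmap_apply]
    simp [Matrix.mulVec_mulVec, Matrix.mul_nonsing_inv _ hdet]
  have e1 : ‖cmap A x‖ ^ 2 = ((Aᵀ * A).mulVec xv) ⬝ᵥ xv := by
    rw [norm_cmap_sq, ← dot_gram]
  have e2 : ((Aᵀ * A).mulVec xv) ⬝ᵥ xv = (inner ℝ y x : ℝ) := by
    rw [inner_eq_dot, hMx]
  have e3 : (inner ℝ y x : ℝ) ≤ ‖y‖ * ‖x‖ := real_inner_le_norm y x
  have key : c ^ 2 * ‖x‖ ^ 2 ≤ ‖y‖ * ‖x‖ := by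
    have h1 := h x
    have h2 : (c * ‖x‖) ^ 2 ≤ ‖cmap A x‖ ^ 2 :=
      pow_le_pow_left₀ (by positivity) h1 2
    rw [mul_pow] at h2
    linarith [e1, e2, e3, h2]
  rcases eq_or_lt_of_le (norm_nonneg x) with h0 | h0
  · rw [← h0]; positivity
  · have h4 : c ^ 2 * ‖x‖ ≤ ‖y‖ := by nlinarith
    calc ‖x‖ = (c ^ 2)⁻¹ * (c ^ 2 * ‖x‖) := by field_simp
      _ ≤ (c ^ 2)⁻¹ * ‖y‖ := by
          exact mul_le_mul_of_nonneg_left h4 (by positivity)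

lemma norm_transpose [DecidableEq m] (M : Matrix m k ℝ) : ‖Mᵀ‖ = ‖M‖ := by
  rw [← Matrix.conjTranspose_eq_transpose_of_trivial, Matrix.l2_opNorm_conjTranspose]

lemma cmap_sub (A B : Matrix m k ℝ) (x : EuclideanSpace ℝ k) :
    cmap (A - B) x = cmap A x - cmap B x := by
  simp only [cmap]
  rw [map_sub]
  simp

end PGI

theorem perturbation_gram_inverse
    (n d : ℕ) (A B : Matrix (Fin n) (Fin d) ℝ)
    (hrankA : A.rank = d) (ε₀ : ℝ)
    (hAB : specNorm (A - B) ≤ ε₀)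
    (hε₀ : ε₀ ≤ 0.1 * sigmaMin A) :
    specNorm ((Aᵀ * A)⁻¹ - (Bᵀ * B)⁻¹) ≤ 8 * kappa A * (sigmaMin A ^ 3)⁻¹ * ε₀ := by
  rcases Nat.eq_zero_or_pos d with hd | hd
  · -- degenerate case d = 0
    subst hd
    haveI : IsEmpty (Fin 0) := inferInstance
    have h1 : specNorm ((Aᵀ * A)⁻¹ - (Bᵀ * B)⁻¹) = 0 := by
      rw [specNorm, PGI.set_empty', Real.sSup_empty]
    have h2 : sigmaMin A = 0 := by
      rw [sigmaMin, PGI.set_empty', Real.sInf_empty]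
    rw [h1, h2]
    norm_num
  · haveI : Nonempty (Fin d) := Fin.pos_iff_nonempty.mp hd
    have hdn : d ≤ n := by
      have := A.rank_le_card_height
      simpa [hrankA] using this
    haveI : Nonempty (Fin n) := Fin.pos_iff_nonempty.mp (lt_of_lt_of_le hd hdn)
    set σ := sigmaMin A with hσdef
    have hσ : 0 < σ := PGI.sigmaMin_pos A hrankA
    have hAB' : ‖A - B‖ ≤ ε₀ := by rwa [← PGI.specNorm_eq]
    have hε0 : 0 ≤ ε₀ := le_trans (norm_nonneg _) hAB'
    have hεσ : ε₀ ≤ 0.1 * σ := hε₀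
    -- σ ≤ ‖A‖
    have hAnorm : σ ≤ ‖A‖ := by
      set y : EuclideanSpace ℝ (Fin d) :=
        EuclideanSpace.single (Classical.arbitrary (Fin d)) (1 : ℝ) with hy
      have hy1 : ‖y‖ = 1 := by rw [hy, EuclideanSpace.norm_single]; norm_num
      calc σ ≤ ‖PGI.cmap A y‖ := PGI.sigmaMin_le A hy1
        _ ≤ ‖A‖ * ‖y‖ := PGI.le_opNorm' A y
        _ = ‖A‖ := by rw [hy1, mul_one]
    have hApos : 0 < ‖A‖ := lt_of_lt_of_le hσ hAnorm
    -- lower bounds on mulVec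
    have hlbA : ∀ x : EuclideanSpace ℝ (Fin d), σ * ‖x‖ ≤ ‖PGI.cmap A x‖ :=
      PGI.sigmaMin_mulVec A
    have hlbB : ∀ x : EuclideanSpace ℝ (Fin d), (0.9 * σ) * ‖x‖ ≤ ‖PGI.cmap B x‖ := by
      intro x
      have h1 := hlbA x
      have h2 : ‖PGI.cmap (A - B) x‖ ≤ ε₀ * ‖x‖ :=
        le_trans (PGI.le_opNorm' (A - B) x)
          (mul_le_mul_of_nonneg_right hAB' (norm_nonneg x))
      have h3 : ‖PGI.cmap A x‖ - ‖PGI.cmap B x‖ ≤ ‖PGI.cmap (A - B) x‖ := by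
        rw [PGI.cmap_sub]
        exact norm_sub_norm_le _ _
      have h4 : ε₀ * ‖x‖ ≤ 0.1 * σ * ‖x‖ :=
        mul_le_mul_of_nonneg_right hεσ (norm_nonneg x)
      nlinarith [norm_nonneg x]
    have h09 : (0:ℝ) < 0.9 * σ := by positivity
    have hUA : IsUnit (Aᵀ * A) := PGI.gram_isUnit hσ hlbA
    have hUB : IsUnit (Bᵀ * B) := PGI.gram_isUnit h09 hlbB
    have dA := (Matrix.isUnit_iff_isUnit_det _).mp hUA
    have dB := (Matrix.isUnit_iff_isUnit_det _).mp hUB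
    have hIA : ‖(Aᵀ * A)⁻¹‖ ≤ (σ ^ 2)⁻¹ := PGI.gram_inv_norm_le hσ hlbA
    have hIB : ‖(Bᵀ * B)⁻¹‖ ≤ ((0.9 * σ) ^ 2)⁻¹ := PGI.gram_inv_norm_le h09 hlbB
    have hBnorm : ‖B‖ ≤ ‖A‖ + ε₀ := by
      calc ‖B‖ = ‖A - (A - B)‖ := by rw [sub_sub_cancel]
        _ ≤ ‖A‖ + ‖A - B‖ := norm_sub_le _ _
        _ ≤ ‖A‖ + ε₀ := by linarith
    -- the resolvent identity
    have hid : (Aᵀ * A)⁻¹ - (Bᵀ * B)⁻¹ =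
        (Aᵀ * A)⁻¹ * (Bᵀ * B - Aᵀ * A) * (Bᵀ * B)⁻¹ := by
      have e1 : (Aᵀ * A)⁻¹ * (Bᵀ * B) * (Bᵀ * B)⁻¹ = (Aᵀ * A)⁻¹ := by
        rw [mul_assoc, Matrix.mul_nonsing_inv _ dB, mul_one]
      have e2 : (Aᵀ * A)⁻¹ * (Aᵀ * A) * (Bᵀ * B)⁻¹ = (Bᵀ * B)⁻¹ := by
        rw [Matrix.nonsing_inv_mul _ dA, one_mul]
      rw [mul_sub, sub_mul, e1, e2]
    -- bound the difference of Gram matrices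
    have hdiff : ‖Bᵀ * B - Aᵀ * A‖ ≤ (‖A‖ + ε₀) * ε₀ + ε₀ * ‖A‖ := by
      have halg : Bᵀ * B - Aᵀ * A = Bᵀ * (B - A) + (B - A)ᵀ * A := by
        rw [Matrix.transpose_sub, Matrix.mul_sub, Matrix.sub_mul]
        abel
      rw [halg]
      have hBA : ‖B - A‖ ≤ ε₀ := by rwa [norm_sub_rev]
      calc ‖Bᵀ * (B - A) + (B - A)ᵀ * A‖
          ≤ ‖Bᵀ * (B - A)‖ + ‖(B - A)ᵀ * A‖ := norm_add_le _ _
        _ ≤ ‖Bᵀ‖ * ‖B - A‖ + ‖(B - A)ᵀ‖ * ‖A‖ :=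
            add_le_add (Matrix.l2_opNorm_mul _ _) (Matrix.l2_opNorm_mul _ _)
        _ = ‖B‖ * ‖B - A‖ + ‖B - A‖ * ‖A‖ := by
            rw [PGI.norm_transpose, PGI.norm_transpose]
        _ ≤ (‖A‖ + ε₀) * ε₀ + ε₀ * ‖A‖ := by
            apply add_le_add
            · exact mul_le_mul hBnorm hBA (norm_nonneg _) (by positivity)
            · exact mul_le_mul_of_nonneg_right hBA (norm_nonneg A)
    -- put everything together
    have hspec : specNorm ((Aᵀ * A)⁻¹ - (Bᵀ * B)⁻¹) =
        ‖(Aᵀ * A)⁻¹ - (Bᵀ * B)⁻¹‖ := PGI.specNorm_eq _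
    have hkap : kappa A = ‖A‖ / σ := by
      rw [kappa, sigmaMax, PGI.specNorm_eq, hσdef]
    rw [hspec, hid, hkap]
    have hbound : ‖(Aᵀ * A)⁻¹ * (Bᵀ * B - Aᵀ * A) * (Bᵀ * B)⁻¹‖
        ≤ (σ ^ 2)⁻¹ * ((‖A‖ + ε₀) * ε₀ + ε₀ * ‖A‖) * ((0.9 * σ) ^ 2)⁻¹ := by
      calc ‖(Aᵀ * A)⁻¹ * (Bᵀ * B - Aᵀ * A) * (Bᵀ * B)⁻¹‖
          ≤ ‖(Aᵀ * A)⁻¹ * (Bᵀ * B - Aᵀ * A)‖ * ‖(Bᵀ * B)⁻¹‖ :=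
            Matrix.l2_opNorm_mul _ _
        _ ≤ (‖(Aᵀ * A)⁻¹‖ * ‖Bᵀ * B - Aᵀ * A‖) * ‖(Bᵀ * B)⁻¹‖ :=
            mul_le_mul_of_nonneg_right (Matrix.l2_opNorm_mul _ _) (norm_nonneg _)
        _ ≤ ((σ ^ 2)⁻¹ * ((‖A‖ + ε₀) * ε₀ + ε₀ * ‖A‖)) * ((0.9 * σ) ^ 2)⁻¹ := by
            apply mul_le_mul _ hIB (norm_nonneg _)
            · positivity
            · apply mul_le_mul hIA hdiff (norm_nonneg _) (by positivity)
    refine le_trans hbound ?_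
    -- final arithmetic
    rw [div_eq_mul_inv]
    have hσ4 : (0:ℝ) < σ ^ 4 := by positivity
    have key : (σ ^ 2)⁻¹ * ((‖A‖ + ε₀) * ε₀ + ε₀ * ‖A‖) * ((0.9 * σ) ^ 2)⁻¹
        = ((‖A‖ + ε₀) * ε₀ + ε₀ * ‖A‖) / (0.81 * σ ^ 4) := by
      rw [div_eq_mul_inv]
      rw [show (0.9 * σ) ^ 2 = 0.81 * σ ^ 2 by ring]
      rw [show (0.81 * σ ^ 4 : ℝ) = σ ^ 2 * (0.81 * σ ^ 2) by ring, mul_inv]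
      ring
    have key2 : 8 * (‖A‖ * σ⁻¹) * (σ ^ 3)⁻¹ * ε₀ = 8 * ‖A‖ * ε₀ / σ ^ 4 := by
      rw [div_eq_mul_inv, show (σ ^ 4 : ℝ) = σ * σ ^ 3 by ring, mul_inv]
      ring
    rw [key, key2, div_le_div_iff₀ (by positivity) hσ4]
    nlinarith [mul_nonneg hε0 hε0, mul_nonneg hε0 hσ.le, hσ4.le,
      mul_le_mul_of_nonneg_left hεσ hε0, mul_le_mul_of_nonneg_left hAnorm hε0]
end
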